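/- arXiv:1507.03201 — 10 statements merged into one kernel-verified Lean document; each statement's English description precedes it below -/
import Mathlib

section
/- The map h is injective: if X, Y ⊆ {1,2,3,…} and h(X) = h(Y), then X = Y. -/
/-- The sum `h(X) := ∑_{n ∈ X} (1/q(n-1) - 1/q n)` associated to a set `X` of
positive natural numbers. -/
noncomputable def hK (q : ℕ → ℝ) (X : Set ℕ) : ℝ :=
  ∑' n : ℕ, Set.indicator X (fun m => 1 / q (m - 1) - 1 / q m) n

/-- The Cantor-type set `K`, the range of `h` over subsets of `{1,2,3,…}`. -/
def Kset (q : ℕ → ℝ) : Set ℝ :=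
  {x | ∃ X : Set ℕ, (∀ n ∈ X, 1 ≤ n) ∧ hK q X = x}

section Aux

variable {q : ℕ → ℝ}

lemma q_ge_pow (hq0 : q 0 = 1) (hqgrow : ∀ k, q (k + 1) > 3 * q k) :
    ∀ k, (3:ℝ) ^ k ≤ q k := by
  intro k
  induction k with
  | zero => simp [hq0]
  | succ n ih =>
      have h := hqgrow n
      have : (3:ℝ) ^ (n + 1) = 3 * 3 ^ n := by ring
      nlinarith

lemma term_nonneg (hqpos : ∀ k, 0 < q k) (hqgrow : ∀ k, q (k + 1) > 3 * q k) (m : ℕ) :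
    0 ≤ 1 / q (m - 1) - 1 / q m := by
  cases m with
  | zero => simp
  | succ n =>
      have h1 : q n ≤ q (n + 1) := by nlinarith [hqgrow n, hqpos n]
      have h2 := hqpos n
      simp only [Nat.succ_sub_one, sub_nonneg]
      exact one_div_le_one_div_of_le h2 h1

lemma summable_term (hq0 : q 0 = 1) (hqpos : ∀ k, 0 < q k)
    (hqgrow : ∀ k, q (k + 1) > 3 * q k) :
    Summable (fun m : ℕ => 1 / q (m - 1) - 1 / q m) := by
  have hgeo : Summable (fun m : ℕ => 3 * (1/3 : ℝ) ^ m) :=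
    (summable_geometric_of_lt_one (by norm_num) (by norm_num)).mul_left 3
  refine Summable.of_nonneg_of_le (term_nonneg hqpos hqgrow) (fun m => ?_) hgeo
  cases m with
  | zero => norm_num
  | succ n =>
      have h3 : (3:ℝ) ^ n ≤ q n := q_ge_pow hq0 hqgrow n
      have hp : (0:ℝ) < 3 ^ n := by positivity
      have hle : 1 / q n ≤ 1 / 3 ^ n := one_div_le_one_div_of_le hp h3
      have hq : (0:ℝ) < 1 / q (n + 1) := div_pos one_pos (hqpos (n + 1))
      have heq : 3 * (1/3 : ℝ) ^ (n + 1) = 1 / 3 ^ n := by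
        rw [one_div_pow]
        field_simp
        ring
      simp only [Nat.succ_sub_one]
      rw [heq]
      linarith

lemma tendsto_inv_q (hq0 : q 0 = 1) (hqpos : ∀ k, 0 < q k)
    (hqgrow : ∀ k, q (k + 1) > 3 * q k) :
    Filter.Tendsto (fun m : ℕ => 1 / q m) Filter.atTop (nhds 0) := by
  have hgeo : Filter.Tendsto (fun m : ℕ => ((1:ℝ)/3) ^ m) Filter.atTop (nhds 0) :=
    tendsto_pow_atTop_nhds_zero_of_lt_one (by norm_num) (by norm_num)
  refine squeeze_zero (fun m => le_of_lt (div_pos one_pos (hqpos m))) (fun m => ?_) hgeo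
  have h3 : (3:ℝ) ^ m ≤ q m := q_ge_pow hq0 hqgrow m
  have hp : (0:ℝ) < 3 ^ m := by positivity
  have := one_div_le_one_div_of_le hp h3
  rw [one_div_pow] at *
  linarith [this]

lemma tail_sum (hq0 : q 0 = 1) (hqpos : ∀ k, 0 < q k)
    (hqgrow : ∀ k, q (k + 1) > 3 * q k) (n : ℕ) :
    ∑' i : ℕ, (1 / q ((i + (n + 1)) - 1) - 1 / q (i + (n + 1))) = 1 / q n := by
  have hsumm : Summable (fun i : ℕ => 1 / q ((i + (n + 1)) - 1) - 1 / q (i + (n + 1))) :=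
    (summable_nat_add_iff (f := fun m : ℕ => 1 / q (m - 1) - 1 / q m) (n + 1)).2
      (summable_term hq0 hqpos hqgrow)
  have hpartial : ∀ N : ℕ,
      ∑ i ∈ Finset.range N, (1 / q ((i + (n + 1)) - 1) - 1 / q (i + (n + 1)))
        = 1 / q n - 1 / q (n + N) := by
    intro N
    have key := Finset.sum_range_sub' (f := fun i => 1 / q (n + i)) N
    have : ∀ i : ℕ, (1 / q ((i + (n + 1)) - 1) - 1 / q (i + (n + 1)))
        = (1 / q (n + i) - 1 / q (n + (i + 1))) := by
      intro i
      have h1 : i + (n + 1) - 1 = n + i := by omega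
      have h2 : i + (n + 1) = n + (i + 1) := by omega
      rw [h1, h2]
    rw [Finset.sum_congr rfl (fun i _ => this i), key]
    simp
  have hlim : Filter.Tendsto
      (fun N => ∑ i ∈ Finset.range N, (1 / q ((i + (n + 1)) - 1) - 1 / q (i + (n + 1))))
      Filter.atTop (nhds (1 / q n)) := by
    simp only [hpartial]
    have h0 : Filter.Tendsto (fun N : ℕ => 1 / q (n + N)) Filter.atTop (nhds 0) := by
      have := (tendsto_inv_q hq0 hqpos hqgrow).comp (Filter.tendsto_add_atTop_nat n)
      simpa [Function.comp_def, Nat.add_comm] using this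
    simpa using Filter.Tendsto.sub tendsto_const_nhds h0
  exact tendsto_nhds_unique hsumm.hasSum.tendsto_sum_nat hlim

lemma key_lt (hq0 : q 0 = 1) (hqpos : ∀ k, 0 < q k)
    (hqgrow : ∀ k, q (k + 1) > 3 * q k) (X Y : Set ℕ) (n : ℕ) (hn1 : 1 ≤ n)
    (hagree : ∀ m < n, (m ∈ X ↔ m ∈ Y)) (hnX : n ∈ X) (hnY : n ∉ Y) :
    hK q Y < hK q X := by
  classical
  set t : ℕ → ℝ := fun m => 1 / q (m - 1) - 1 / q m with ht
  have hst : Summable t := summable_term hq0 hqpos hqgrow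
  have htnn : ∀ m, 0 ≤ t m := fun m => term_nonneg hqpos hqgrow m
  clear_value t
  have hsX : Summable (X.indicator t) := hst.indicator X
  have hsY : Summable (Y.indicator t) := hst.indicator Y
  have splitX := Summable.sum_add_tsum_nat_add (f := X.indicator t) (n + 1) hsX
  have splitY := Summable.sum_add_tsum_nat_add (f := Y.indicator t) (n + 1) hsY
  have hfin : ∑ i ∈ Finset.range (n + 1), X.indicator t i
      = ∑ i ∈ Finset.range (n + 1), Y.indicator t i + t n := by
    rw [Finset.sum_range_succ, Finset.sum_range_succ,
      Set.indicator_of_mem hnX, Set.indicator_of_notMem hnY]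
    rw [Finset.sum_congr rfl (fun i hi => ?_)]
    · ring
    · have hiff := hagree i (Finset.mem_range.1 hi)
      by_cases h : i ∈ X
      · rw [Set.indicator_of_mem h, Set.indicator_of_mem (hiff.1 h)]
      · rw [Set.indicator_of_notMem h,
          Set.indicator_of_notMem (fun hh => h (hiff.2 hh))]
  have htailX : 0 ≤ ∑' i : ℕ, X.indicator t (i + (n + 1)) :=
    tsum_nonneg fun i => Set.indicator_nonneg
      (fun m _ => htnn m) _
  have htailY : ∑' i : ℕ, Y.indicator t (i + (n + 1)) ≤ 1 / q n := by
    have h1 : ∑' i : ℕ, Y.indicator t (i + (n + 1)) ≤ ∑' i : ℕ, t (i + (n + 1)) := by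
      refine Summable.tsum_le_tsum (fun i => ?_)
        ((summable_nat_add_iff (f := Y.indicator t) (n + 1)).2 hsY)
        ((summable_nat_add_iff (f := t) (n + 1)).2 hst)
      exact Set.indicator_le_self' (fun m _ => htnn m) _
    have h2 : ∑' i : ℕ, t (i + (n + 1)) = 1 / q n := by
      simp only [ht]; exact tail_sum hq0 hqpos hqgrow n
    linarith
  have htn : 1 / q n < t n := by
    obtain ⟨k, rfl⟩ : ∃ k, n = k + 1 := ⟨n - 1, by omega⟩
    have h1 := hqpos k
    have h2 := hqpos (k + 1)
    have h3 := hqgrow k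
    have : (1 : ℝ) / q (k + 1) + 1 / q (k + 1) < 1 / q k := by
      rw [← add_div, div_lt_div_iff₀ h2 h1]
      nlinarith
    simp only [ht, Nat.add_sub_cancel]
    linarith
  have hXval : hK q X = ∑ i ∈ Finset.range (n + 1), X.indicator t i
      + ∑' i : ℕ, X.indicator t (i + (n + 1)) := by
    rw [hK, ← ht]; exact splitX.symm
  have hYval : hK q Y = ∑ i ∈ Finset.range (n + 1), Y.indicator t i
      + ∑' i : ℕ, Y.indicator t (i + (n + 1)) := by
    rw [hK, ← ht]; exact splitY.symm
  rw [hXval, hYval, hfin]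
  linarith

end Aux

/-- The map `h` is injective on subsets of `{1,2,3,…}`. -/
theorem stmt_0 (q : ℕ → ℝ) (hq0 : q 0 = 1) (hqpos : ∀ k, 0 < q k)
    (hqgrow : ∀ k, q (k + 1) > 3 * q k)
    (X Y : Set ℕ) (hX : ∀ n ∈ X, 1 ≤ n) (hY : ∀ n ∈ Y, 1 ≤ n)
    (hEq : hK q X = hK q Y) : X = Y := by
  classical
  by_contra hne
  have hd : ∃ n : ℕ, ¬ ((n ∈ X) ↔ (n ∈ Y)) := by
    by_contra h
    push_neg at h
    exact hne (Set.ext fun n => h n)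
  set n := Nat.find hd with hn_def
  have hn := Nat.find_spec hd
  have hmin : ∀ m < n, ((m ∈ X) ↔ (m ∈ Y)) := fun m hm =>
    not_not.1 (Nat.find_min hd hm)
  by_cases hx : n ∈ X
  · have hy : n ∉ Y := fun hy => hn ⟨fun _ => hy, fun _ => hx⟩
    exact (key_lt hq0 hqpos hqgrow X Y n (hX n hx) hmin hx hy).ne' hEq
  · have hy : n ∈ Y := by
      by_contra hy
      exact hn ⟨fun h => absurd h hx, fun h => absurd h hy⟩
    exact (key_lt hq0 hqpos hqgrow Y X n (hY n hy)
      (fun m hm => (hmin m hm).symm) hy hx).ne hEq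
end

section
/- The set K has no isolated points: every point x ∈ K lies in the closure of K \ {x}, i.e., every neighbourhood of x contains a point of K different from x. -/
/-- `K` has no isolated points: every point of `K` is in the closure of
`K` minus that point. -/
theorem stmt_5 (q : ℕ → ℝ) (hq0 : q 0 = 1) (hqpos : ∀ k, 0 < q k)
    (hqgrow : ∀ k, q (k + 1) > 3 * q k) :
    ∀ x ∈ Kset q, x ∈ closure (Kset q \ {x}) := by
  set f : ℕ → ℝ := fun m => 1 / q (m - 1) - 1 / q m with hf
  have hq3 : ∀ k, (3:ℝ)^k ≤ q k := by
    intro k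
    induction k with
    | zero => simp [hq0]
    | succ k ih =>
      have h1 := hqgrow k
      have : (3:ℝ)^(k+1) = 3 * 3^k := by ring
      nlinarith
  have hmono : Monotone q := by
    apply monotone_nat_of_le_succ
    intro k
    nlinarith [hqpos k, hqgrow k]
  have hlt : ∀ k, q k < q (k+1) := by
    intro k; nlinarith [hqpos k, hqgrow k]
  have fnonneg : ∀ n, 0 ≤ f n := by
    intro n
    have h1 : 0 < q (n-1) := hqpos _
    have h2 : q (n-1) ≤ q n := hmono (Nat.sub_le n 1)
    have := one_div_le_one_div_of_le h1 h2
    simp only [hf]; linarith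
  have fpos : ∀ n, 1 ≤ n → 0 < f n := by
    intro n hn
    obtain ⟨k, rfl⟩ := Nat.exists_eq_add_of_le hn
    have h1 : q (1 + k - 1) < q (1 + k) := by
      have : 1 + k - 1 = k := by omega
      rw [this]
      have : 1 + k = k + 1 := by omega
      rw [this]; exact hlt k
    have := one_div_lt_one_div_of_lt (hqpos _) h1
    simp only [hf]; linarith
  have fle : ∀ n, f n ≤ 3 * (1/3:ℝ)^n := by
    intro n
    cases n with
    | zero => simp [hf]
    | succ k =>
      have h1 : 0 < q k := hqpos k
      have h2 : (3:ℝ)^k ≤ q k := hq3 k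
      have h3 : 1 / q k ≤ 1 / (3:ℝ)^k :=
        one_div_le_one_div_of_le (pow_pos (by norm_num) k) h2
      have h4 : 1 / q (k+1) > 0 := one_div_pos.mpr (hqpos _)
      have h5 : (1/(3:ℝ))^(k+1) = 1/(3:ℝ)^(k+1) := by
        rw [one_div_pow]
      have h6 : f (k+1) = 1 / q k - 1 / q (k+1) := by simp [hf]
      rw [h6, h5]
      have : 3 * (1/(3:ℝ)^(k+1)) = 1/(3:ℝ)^k := by
        rw [pow_succ]; field_simp
      rw [this]; linarith
  have fsum : Summable f := by
    apply Summable.of_nonneg_of_le fnonneg fle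
    exact (summable_geometric_of_lt_one (by norm_num) (by norm_num)).mul_left 3
  -- key: hK of insert
  have hins : ∀ (X : Set ℕ) (n : ℕ), n ∉ X → hK q (insert n X) = hK q X + f n := by
    intro X n hn
    have hdisj : Disjoint ({n} : Set ℕ) X := Set.disjoint_singleton_left.mpr hn
    have heq : ∀ m, (insert n X).indicator f m = ({n} : Set ℕ).indicator f m + X.indicator f m := by
      intro m
      by_cases h1 : m = n
      · subst h1; simp [Set.indicator, hn]
      · by_cases h2 : m ∈ X <;> simp [Set.indicator, h1, h2]
    have hs1 : Summable (({n} : Set ℕ).indicator f) := fsum.indicator _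
    have hs2 : Summable (X.indicator f) := fsum.indicator _
    have h1 : hK q (insert n X) = ∑' m, (({n} : Set ℕ).indicator f m + X.indicator f m) := by
      unfold hK
      rw [← hf]
      exact tsum_congr heq
    rw [h1, Summable.tsum_add hs1 hs2]
    have h2 : ∑' m, ({n} : Set ℕ).indicator f m = f n := by
      rw [tsum_eq_single n]
      · simp
      · intro m hm; simp [Set.indicator, hm]
    rw [h2]
    have : hK q X = ∑' m, X.indicator f m := by unfold hK; rw [← hf]
    rw [this]; ring
  -- main argument
  intro x hx
  obtain ⟨X, hX1, hXx⟩ := hx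
  rw [Metric.mem_closure_iff]
  intro ε hε
  obtain ⟨n₀, hn₀⟩ := exists_pow_lt_of_lt_one (show (0:ℝ) < ε/3 by linarith) (show (1/3:ℝ) < 1 by norm_num)
  set n := max n₀ 1 with hn
  have hn1 : 1 ≤ n := le_max_right _ _
  have hfn : f n < ε := by
    have h1 : f n ≤ 3 * (1/3:ℝ)^n := fle n
    have h2 : (1/3:ℝ)^n ≤ (1/3:ℝ)^n₀ :=
      pow_le_pow_of_le_one (by norm_num) (by norm_num) (le_max_left _ _)
    calc f n ≤ 3 * (1/3:ℝ)^n := h1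
      _ ≤ 3 * (1/3:ℝ)^n₀ := by linarith
      _ < ε := by linarith
  have hfnpos : 0 < f n := fpos n hn1
  by_cases hnX : n ∈ X
  · -- remove n
    set Y := X \ {n} with hY
    have hnY : n ∉ Y := by simp [hY]
    have hXY : X = insert n Y := by
      rw [hY]; simp [Set.insert_diff_singleton, Set.insert_eq_self.mpr hnX]
    have hval : hK q X = hK q Y + f n := by rw [hXY]; exact hins Y n hnY
    refine ⟨hK q Y, ⟨⟨Y, fun m hm => hX1 m hm.1, rfl⟩, ?_⟩, ?_⟩
    · simp only [Set.mem_singleton_iff]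
      intro h
      rw [← hXx] at h
      rw [hval] at h; linarith
    · rw [← hXx, hval]
      rw [Real.dist_eq]
      rw [abs_of_pos (by linarith)]
      linarith
  · -- add n
    set Y := insert n X with hY
    have hval : hK q Y = hK q X + f n := hins X n hnX
    refine ⟨hK q Y, ⟨⟨Y, ?_, rfl⟩, ?_⟩, ?_⟩
    · intro m hm
      rcases hm with h | h
      · exact h ▸ hn1
      · exact hX1 m h
    · simp only [Set.mem_singleton_iff]
      intro h
      rw [← hXx] at h
      rw [hval] at h; linarith
    · rw [← hXx, hval]
      rw [Real.dist_eq]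
      rw [abs_of_neg (by linarith)]
      linarith
end

section
/- Existence of the defining sequence: given any increasing sequence (P_k)_{k∈ℕ} of finite subsets of ℚ with ⋃_k P_k = ℚ, there exists a sequence q : ℕ → ℝ with q 0 = 1 such that (i) q k > 0 for all k and the reals q 1, q 2, q 3, … are algebraically independent over ℚ; (ii) q (k+1) > 3 · q k for all k; (iii) for every k and all p_0, …, p_k ∈ P_k not all zero, |∑_{i=0}^k p_i / q_i| > 1/q (k+1); and (iv) for every m ∈ ℕ, the quotient exp^[m](q k) / q (k+1) tends to 0 as k → ∞, where exp^[m] denotes the m-th compositional iterate of the real exponential function. -/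
open Filter Set Polynomial

private lemma le_exp_iterate (k : ℕ) (x : ℝ) : x ≤ Real.exp^[k] x := by
  induction k generalizing x with
  | zero => simp
  | succ n ih =>
    rw [Function.iterate_succ_apply]
    have h1 : x ≤ Real.exp x := by nlinarith [Real.add_one_le_exp x]
    exact h1.trans (ih (Real.exp x))

private lemma exp_iterate_mono {m n : ℕ} (h : m ≤ n) (x : ℝ) :
    Real.exp^[m] x ≤ Real.exp^[n] x := by
  conv_rhs => rw [← Nat.sub_add_cancel h, Function.iterate_add_apply]
  exact le_exp_iterate _ _

private lemma exp_iterate_pos {m : ℕ} {x : ℝ} (hx : 0 < x) : 0 < Real.exp^[m] x :=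
  hx.trans_le (le_exp_iterate m x)

private lemma countable_adjoin {s : Set ℝ} (hs : s.Countable) :
    Countable (Algebra.adjoin ℚ s) := by
  haveI := hs.to_subtype
  haveI : Countable (MvPolynomial s ℚ) := by
    delta MvPolynomial
    exact Function.Injective.countable (f := AddMonoidAlgebra.coeff) (fun a b h => by cases a; cases b; cases h; rfl)
  have h : (Algebra.adjoin ℚ s : Set ℝ) = Set.range (MvPolynomial.aeval ((↑) : s → ℝ) : MvPolynomial s ℚ →ₐ[ℚ] ℝ) := by
    rw [Algebra.adjoin_eq_range]; rfl
  have h2 : ((Algebra.adjoin ℚ s : Set ℝ)).Countable := h ▸ Set.countable_range _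
  exact h2.to_subtype

private lemma exists_transcendental_gt {s : Set ℝ} (hs : s.Countable) (B : ℝ) :
    ∃ x : ℝ, B < x ∧ Transcendental (Algebra.adjoin ℚ s) x := by
  haveI := countable_adjoin hs
  haveI : Module.IsTorsionFree (Algebra.adjoin ℚ s) ℝ :=
    Module.isTorsionFree_iff_algebraMap_injective.mpr Subtype.val_injective
  have h1 : {x : ℝ | IsAlgebraic (Algebra.adjoin ℚ s) x}.Countable :=
    Algebraic.countable (Algebra.adjoin ℚ s) ℝ
  by_contra hcon
  push_neg at hcon
  have hsub : Set.Ioi B ⊆ {x : ℝ | IsAlgebraic (Algebra.adjoin ℚ s) x} := by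
    intro x hx
    by_contra hx2
    exact (hcon x hx) hx2
  have hC : (Set.Ioi B).Countable := h1.mono hsub
  have := Cardinal.mk_Ioi_real B
  have h2 : Cardinal.mk (Set.Ioi B) ≤ Cardinal.aleph0 := by
    rw [Cardinal.mk_le_aleph0_iff]
    exact hC.to_subtype
  rw [this] at h2
  exact (Cardinal.aleph0_lt_continuum).not_ge h2
private noncomputable def BB (P : ℕ → Finset ℚ) (n : ℕ) (f : ℕ → ℝ) : ℝ :=
  3 * f n + (n + 1 : ℝ) * Real.exp^[n + 1] (f n) + 1 +
    ∑ p ∈ Fintype.piFinset (fun _ : Fin (n + 1) => P n),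
      1 / |∑ i : Fin (n + 1), (p i : ℝ) / f (i : ℕ)|

private def GG (n : ℕ) (f : ℕ → ℝ) : Set ℝ :=
  (f '' Set.Icc 1 n) ∪ ((fun x : ℝ => x⁻¹) '' (f '' Set.Icc 1 n))

private lemma GG_countable (n : ℕ) (f : ℕ → ℝ) : (GG n f).Countable :=
  (((Set.finite_Icc 1 n).image f).union (((Set.finite_Icc 1 n).image f).image _)).countable

private noncomputable def nxt (P : ℕ → Finset ℚ) (n : ℕ) (f : ℕ → ℝ) : ℝ :=
  (exists_transcendental_gt (GG_countable n f) (BB P n f)).choose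

private lemma nxt_gt (P : ℕ → Finset ℚ) (n : ℕ) (f : ℕ → ℝ) : BB P n f < nxt P n f :=
  (exists_transcendental_gt (GG_countable n f) (BB P n f)).choose_spec.1

private lemma nxt_trans (P : ℕ → Finset ℚ) (n : ℕ) (f : ℕ → ℝ) :
    Transcendental (Algebra.adjoin ℚ (GG n f)) (nxt P n f) :=
  (exists_transcendental_gt (GG_countable n f) (BB P n f)).choose_spec.2

private noncomputable def sqh (P : ℕ → Finset ℚ) : ℕ → (ℕ → ℝ)
  | 0 => fun _ => 1
  | n + 1 => Function.update (sqh P n) (n + 1) (nxt P n (sqh P n))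

private noncomputable def qq (P : ℕ → Finset ℚ) (n : ℕ) : ℝ := sqh P n n

private lemma qq_zero (P : ℕ → Finset ℚ) : qq P 0 = 1 := rfl

private lemma qq_succ (P : ℕ → Finset ℚ) (n : ℕ) : qq P (n + 1) = nxt P n (sqh P n) := by
  simp [qq, sqh]

private lemma sq_eq (P : ℕ → Finset ℚ) : ∀ {k n : ℕ}, k ≤ n → sqh P n k = qq P k := by
  intro k n
  induction n with
  | zero => intro hk; interval_cases k; rfl
  | succ n ih =>
    intro hk
    rcases Nat.lt_or_ge k (n + 1) with h | h
    · have : sqh P (n + 1) k = sqh P n k := by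
        simp [sqh, Function.update_of_ne (by omega : k ≠ n + 1)]
      rw [this, ih (by omega)]
    · have : k = n + 1 := by omega
      subst this; rfl
private lemma BB_sum_nonneg (P : ℕ → Finset ℚ) (n : ℕ) (f : ℕ → ℝ) :
    0 ≤ ∑ p ∈ Fintype.piFinset (fun _ : Fin (n + 1) => P n),
      1 / |∑ i : Fin (n + 1), (p i : ℝ) / f (i : ℕ)| :=
  Finset.sum_nonneg fun _ _ => by positivity

private lemma BB_ge_mul (P : ℕ → Finset ℚ) (n : ℕ) (f : ℕ → ℝ) (hf : 0 < f n) :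
    (n + 1 : ℝ) * Real.exp^[n + 1] (f n) ≤ BB P n f := by
  have h1 := BB_sum_nonneg P n f
  unfold BB
  nlinarith [exp_iterate_pos (m := n + 1) hf]

private lemma BB_ge_three (P : ℕ → Finset ℚ) (n : ℕ) (f : ℕ → ℝ) (hf : 0 < f n) :
    3 * f n ≤ BB P n f := by
  have h1 := BB_sum_nonneg P n f
  have h2 : 0 < Real.exp^[n + 1] (f n) := exp_iterate_pos hf
  unfold BB
  nlinarith

private lemma BB_pos (P : ℕ → Finset ℚ) (n : ℕ) (f : ℕ → ℝ) (hf : 0 < f n) :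
    0 < BB P n f := by
  have h1 := BB_sum_nonneg P n f
  have h2 : 0 < Real.exp^[n + 1] (f n) := exp_iterate_pos hf
  unfold BB
  nlinarith

private lemma BB_ge_term (P : ℕ → Finset ℚ) (n : ℕ) (f : ℕ → ℝ) (hf : 0 < f n)
    (p : Fin (n + 1) → ℚ) (hp : p ∈ Fintype.piFinset (fun _ : Fin (n + 1) => P n)) :
    1 / |∑ i : Fin (n + 1), (p i : ℝ) / f (i : ℕ)| ≤ BB P n f := by
  have h1 : 1 / |∑ i : Fin (n + 1), (p i : ℝ) / f (i : ℕ)| ≤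
      ∑ q ∈ Fintype.piFinset (fun _ : Fin (n + 1) => P n),
        1 / |∑ i : Fin (n + 1), (q i : ℝ) / f (i : ℕ)| :=
    Finset.single_le_sum (f := fun q : Fin (n+1) → ℚ => 1 / |∑ i : Fin (n + 1), (q i : ℝ) / f (i : ℕ)|) (fun _ _ => by positivity) hp
  have h2 : 0 < Real.exp^[n + 1] (f n) := exp_iterate_pos hf
  unfold BB
  nlinarith

private lemma qq_pos (P : ℕ → Finset ℚ) : ∀ n, 0 < qq P n := by
  intro n
  induction n with
  | zero => norm_num [qq_zero]
  | succ n ih =>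
    have h1 : BB P n (sqh P n) < qq P (n + 1) := qq_succ P n ▸ nxt_gt P n (sqh P n)
    have h2 : sqh P n n = qq P n := rfl
    have := BB_pos P n (sqh P n) (h2 ▸ ih)
    linarith

private lemma qq_growth (P : ℕ → Finset ℚ) (n : ℕ) : 3 * qq P n < qq P (n + 1) := by
  have h1 : BB P n (sqh P n) < qq P (n + 1) := qq_succ P n ▸ nxt_gt P n (sqh P n)
  have h2 : sqh P n n = qq P n := rfl
  have := BB_ge_three P n (sqh P n) (h2 ▸ qq_pos P n)
  rw [h2] at this
  linarith

private lemma qq_strictMono (P : ℕ → Finset ℚ) : StrictMono (qq P) := by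
  apply strictMono_nat_of_lt_succ
  intro n
  have := qq_growth P n
  have := qq_pos P n
  linarith
private lemma qq_nonvanish (P : ℕ → Finset ℚ) :
    ∀ (k : ℕ) (c : ℕ → ℚ), (∃ i, i ≤ k ∧ c i ≠ 0) →
      ∑ i ∈ Finset.range (k + 1), (c i : ℝ) / qq P i ≠ 0 := by
  intro k
  induction k with
  | zero =>
    rintro c ⟨i0, hi0, hne⟩
    interval_cases i0
    simp [qq_zero, hne]
  | succ k ih =>
    rintro c ⟨i0, hi0, hne⟩ h0
    by_cases hck : c (k + 1) = 0
    · rw [Finset.sum_range_succ, hck] at h0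
      simp only [Rat.cast_zero, zero_div, add_zero] at h0
      have hi0' : i0 ≤ k := by
        rcases Nat.lt_or_ge i0 (k + 1) with h | h
        · omega
        · exfalso; apply hne; have : i0 = k + 1 := by omega
          rw [this]; exact hck
      exact ih c ⟨i0, hi0', hne⟩ h0
    · rw [Finset.sum_range_succ] at h0
      have hq1 : qq P (k + 1) ≠ 0 := ne_of_gt (qq_pos _ _)
      have hc : (c (k + 1) : ℝ) ≠ 0 := by exact_mod_cast hck
      have hrT : ∑ i ∈ Finset.range (k + 1), ((-(c i / c (k + 1)) : ℚ) : ℝ) * (qq P i)⁻¹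
          = (qq P (k + 1))⁻¹ := by
        have hterm : ∀ i ∈ Finset.range (k + 1),
            ((-(c i / c (k + 1)) : ℚ) : ℝ) * (qq P i)⁻¹
              = (-(c (k + 1) : ℝ)⁻¹) * ((c i : ℝ) / qq P i) := by
          intro i _
          push_cast
          rw [div_eq_mul_inv, div_eq_mul_inv]
          ring
        rw [Finset.sum_congr rfl hterm, ← Finset.mul_sum]
        have hsum : ∑ i ∈ Finset.range (k + 1), (c i : ℝ) / qq P i
            = -((c (k + 1) : ℝ) / qq P (k + 1)) := by linarith
        rw [hsum]
        field_simp
      have hrne : ∑ i ∈ Finset.range (k + 1), ((-(c i / c (k + 1)) : ℚ) : ℝ) * (qq P i)⁻¹ ≠ 0 := by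
        rw [hrT]; exact inv_ne_zero hq1
      have hrmem : ∑ i ∈ Finset.range (k + 1), ((-(c i / c (k + 1)) : ℚ) : ℝ) * (qq P i)⁻¹
          ∈ Algebra.adjoin ℚ (GG k (sqh P k)) := by
        apply Subalgebra.sum_mem
        intro i hi
        apply Subalgebra.mul_mem
        · have h3 := Subalgebra.algebraMap_mem (Algebra.adjoin ℚ (GG k (sqh P k)))
            (-(c i / c (k + 1)))
          rwa [eq_ratCast (algebraMap ℚ ℝ)] at h3
        · rcases Nat.eq_zero_or_pos i with h0' | h1'
          · subst h0'; rw [qq_zero, inv_one]; exact Subalgebra.one_mem _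
          · have hik : i ≤ k := Nat.lt_succ_iff.mp (Finset.mem_range.mp hi)
            apply Algebra.subset_adjoin
            right
            exact ⟨qq P i, ⟨i, ⟨h1', hik⟩, sq_eq P hik⟩, rfl⟩
      have htr : Transcendental (Algebra.adjoin ℚ (GG k (sqh P k))) (qq P (k + 1)) := by
        rw [qq_succ]; exact nxt_trans P k (sqh P k)
      apply htr
      refine ⟨Polynomial.C (⟨_, hrmem⟩ : Algebra.adjoin ℚ (GG k (sqh P k))) * Polynomial.X - 1,
        ?_, ?_⟩
      · intro h
        have h4 := congrArg (fun pp => Polynomial.coeff pp 1) h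
        simp only [Polynomial.coeff_sub, Polynomial.coeff_C_mul, Polynomial.coeff_X_one,
          mul_one, Polynomial.coeff_one, Polynomial.coeff_zero] at h4
        apply hrne
        have h5 := congrArg Subtype.val h4
        simpa using h5
      · rw [map_sub, map_mul, Polynomial.aeval_C, Polynomial.aeval_X, map_one]
        show (∑ i ∈ Finset.range (k + 1), ((-(c i / c (k + 1)) : ℚ) : ℝ) * (qq P i)⁻¹)
            * qq P (k + 1) - 1 = 0
        rw [hrT, inv_mul_cancel₀ hq1, sub_self]
private lemma qq_fin_indep (P : ℕ → Finset ℚ) :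
    ∀ n : ℕ, AlgebraicIndependent ℚ (fun i : Fin n => qq P ((i : ℕ) + 1)) := by
  intro n
  induction n with
  | zero =>
    rw [algebraicIndependent_empty_type_iff]
    exact (algebraMap ℚ ℝ).injective
  | succ n ih =>
    have hsub : Set.range (fun i : Fin n => qq P ((i : ℕ) + 1)) ⊆ GG n (sqh P n) := by
      rintro x ⟨i, rfl⟩
      left
      exact ⟨(i : ℕ) + 1, ⟨by omega, by omega⟩, sq_eq P (by omega)⟩
    have htr : Transcendental
        (Algebra.adjoin ℚ (Set.range (fun i : Fin n => qq P ((i : ℕ) + 1)))) (qq P (n + 1)) := by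
      have h1 : Transcendental (Algebra.adjoin ℚ (GG n (sqh P n))) (qq P (n + 1)) := by
        rw [qq_succ]; exact nxt_trans P n (sqh P n)
      exact Transcendental.of_tower_top_of_subalgebra_le (Algebra.adjoin_mono hsub) h1
    have h2 := (ih.option_iff_transcendental (qq P (n + 1))).mpr htr
    have hcomp : (fun o : Option (Fin n) => o.elim (qq P (n + 1))
        (fun i : Fin n => qq P ((i : ℕ) + 1))) ∘ finSuccEquivLast
          = fun i : Fin (n + 1) => qq P ((i : ℕ) + 1) := by
      funext i
      refine Fin.lastCases ?_ ?_ i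
      · simp [finSuccEquivLast_last]
      · intro j
        simp [finSuccEquivLast_castSucc]
    exact (algebraicIndependent_equiv' finSuccEquivLast hcomp).mpr h2

private lemma qq_indep (P : ℕ → Finset ℚ) :
    AlgebraicIndependent ℚ (fun k : ℕ => qq P (k + 1)) := by
  have hinj : Function.Injective (fun k : ℕ => qq P (k + 1)) := by
    intro a b h
    have := (qq_strictMono P).injective h
    omega
  rw [← algebraicIndependent_subtype_range hinj]
  have hU : Set.range (fun k : ℕ => qq P (k + 1))
      = ⋃ n : ℕ, Set.range (fun i : Fin n => qq P ((i : ℕ) + 1)) := by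
    ext x
    simp only [Set.mem_range, Set.mem_iUnion]
    constructor
    · rintro ⟨k, rfl⟩
      exact ⟨k + 1, ⟨⟨k, by omega⟩, rfl⟩⟩
    · rintro ⟨n, i, rfl⟩
      exact ⟨i, rfl⟩
  rw [hU]
  apply algebraicIndependent_iUnion_of_directed
  · apply Monotone.directed_le
    intro a b hab x
    rintro ⟨i, rfl⟩
    exact ⟨⟨(i : ℕ), by omega⟩, rfl⟩
  · intro n
    have hinjn : Function.Injective (fun i : Fin n => qq P ((i : ℕ) + 1)) := by
      intro a b h
      have := (qq_strictMono P).injective h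
      exact Fin.ext (by omega)
    exact (algebraicIndependent_subtype_range hinjn).mpr (qq_fin_indep P n)
/-- Existence of the defining sequence of Section 2: given any increasing
sequence `(P k)` of finite sets of rationals covering `ℚ`, there is a sequence
`q : ℕ → ℝ` with `q 0 = 1`, positive terms whose later terms are algebraically
independent over `ℚ`, satisfying the growth condition (A), the diophantine
condition (B), and the exponential-gap condition (C). -/
theorem stmt_6 (P : ℕ → Finset ℚ) (hPmono : Monotone P)
    (hPcover : ∀ r : ℚ, ∃ k, r ∈ P k) :
    ∃ q : ℕ → ℝ,
      q 0 = 1 ∧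
      (∀ k, 0 < q k) ∧
      AlgebraicIndependent ℚ (fun k : ℕ => q (k + 1)) ∧
      (∀ k, q (k + 1) > 3 * q k) ∧
      (∀ k : ℕ, ∀ p : ℕ → ℚ, (∀ i ≤ k, p i ∈ P k) → (∃ i ≤ k, p i ≠ 0) →
        |∑ i ∈ Finset.range (k + 1), (p i : ℝ) / q i| > 1 / q (k + 1)) ∧
      (∀ m : ℕ, Filter.Tendsto (fun k => (Real.exp)^[m] (q k) / q (k + 1))
        Filter.atTop (nhds 0)) := by
  refine ⟨qq P, rfl, qq_pos P, qq_indep P, fun k => qq_growth P k, ?_, ?_⟩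
  · -- diophantine condition (B)
    intro k p hmem hex
    have hS0 : ∑ i ∈ Finset.range (k + 1), (p i : ℝ) / qq P i ≠ 0 := by
      obtain ⟨i0, hi0, hne⟩ := hex
      exact qq_nonvanish P k p ⟨i0, hi0, hne⟩
    have habs : 0 < |∑ i ∈ Finset.range (k + 1), (p i : ℝ) / qq P i| := abs_pos.mpr hS0
    have hfpos : 0 < sqh P k k := qq_pos P k
    have hpmem : (fun i : Fin (k + 1) => p (i : ℕ)) ∈
        Fintype.piFinset (fun _ : Fin (k + 1) => P k) :=
      Fintype.mem_piFinset.mpr fun i => hmem (i : ℕ) (Nat.lt_succ_iff.mp i.2)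
    have hterm := BB_ge_term P k (sqh P k) hfpos (fun i : Fin (k + 1) => p (i : ℕ)) hpmem
    have h5 : ∑ i : Fin (k + 1), (p (i : ℕ) : ℝ) / sqh P k (i : ℕ)
        = ∑ i ∈ Finset.range (k + 1), (p i : ℝ) / qq P i := by
      rw [← Fin.sum_univ_eq_sum_range (fun i => (p i : ℝ) / qq P i) (k + 1)]
      exact Finset.sum_congr rfl fun i _ => by
        rw [sq_eq P (Nat.lt_succ_iff.mp i.2)]
    rw [h5] at hterm
    have hlt : BB P k (sqh P k) < qq P (k + 1) := qq_succ P k ▸ nxt_gt P k (sqh P k)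
    have h6 : 1 / |∑ i ∈ Finset.range (k + 1), (p i : ℝ) / qq P i| < qq P (k + 1) :=
      lt_of_le_of_lt hterm hlt
    rw [div_lt_iff₀ habs] at h6
    rw [gt_iff_lt, div_lt_iff₀ (qq_pos P (k + 1))]
    nlinarith
  · -- exponential gap condition (C)
    intro m
    apply tendsto_of_tendsto_of_tendsto_of_le_of_le' tendsto_const_nhds
      tendsto_one_div_add_atTop_nhds_zero_nat
    · exact Filter.Eventually.of_forall fun k =>
        div_nonneg (exp_iterate_pos (qq_pos P k)).le (qq_pos P (k + 1)).le
    · filter_upwards [Filter.eventually_ge_atTop m] with k hk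
      have h1 : Real.exp^[m] (qq P k) ≤ Real.exp^[k + 1] (qq P k) :=
        exp_iterate_mono (by omega) _
      have h2 : (k + 1 : ℝ) * Real.exp^[k + 1] (sqh P k k) ≤ BB P k (sqh P k) :=
        BB_ge_mul P k (sqh P k) (qq_pos P k)
      have h2' : (k + 1 : ℝ) * Real.exp^[k + 1] (qq P k) ≤ BB P k (sqh P k) := h2
      have hlt : BB P k (sqh P k) < qq P (k + 1) := qq_succ P k ▸ nxt_gt P k (sqh P k)
      have hpos : 0 < Real.exp^[m] (qq P k) := exp_iterate_pos (qq_pos P k)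
      rw [div_le_div_iff₀ (qq_pos P (k + 1)) (by positivity : (0 : ℝ) < (k : ℝ) + 1)]
      nlinarith
end

section
/- Truncations are determined by position (the concrete form of Axiom T8): for all X, Y ⊆ {1,2,3,…} and every m ∈ ℕ, if 0 ≤ h(Y) − h(X ∩ {1,…,m}) ≤ 1/q m, then Y ∩ {1,…,m} = X ∩ {1,…,m}. -/
/-- Truncations are determined by position: if `0 ≤ h(Y) - h(X ∩ {1,…,m}) ≤ 1/q m`,
then `Y ∩ {1,…,m} = X ∩ {1,…,m}`. -/
theorem stmt_8 (q : ℕ → ℝ) (hq0 : q 0 = 1) (hqpos : ∀ k, 0 < q k)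
    (hqgrow : ∀ k, q (k + 1) > 3 * q k)
    (X Y : Set ℕ) (hX : ∀ n ∈ X, 1 ≤ n) (hY : ∀ n ∈ Y, 1 ≤ n) (m : ℕ)
    (h1 : 0 ≤ hK q Y - hK q (X ∩ Set.Icc 1 m))
    (h2 : hK q Y - hK q (X ∩ Set.Icc 1 m) ≤ 1 / q m) :
    Y ∩ Set.Icc 1 m = X ∩ Set.Icc 1 m := by
  classical
  set a : ℕ → ℝ := fun k => 1 / q (k - 1) - 1 / q k with ha_def
  have hmono : StrictMono q := strictMono_nat_of_lt_succ fun k => by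
    have h1' := hqpos k; have h2' := hqgrow k; linarith
  have hanneg : ∀ k, 0 ≤ a k := by
    intro k
    have h1' : q (k - 1) ≤ q k := hmono.monotone (Nat.sub_le k 1)
    have h2' := hqpos (k - 1)
    have h3' := one_div_le_one_div_of_le h2' h1'
    simp only [ha_def]
    linarith
  have hagt : ∀ k, 1 ≤ k → 2 / q k < a k := by
    intro k hk
    obtain ⟨j, rfl⟩ : ∃ j, k = j + 1 := ⟨k - 1, by omega⟩
    have hg := hqgrow j
    have hpj := hqpos j
    have hpj1 := hqpos (j + 1)
    have hlt : 3 / q (j + 1) < 1 / q j := by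
      rw [div_lt_div_iff₀ hpj1 hpj]; nlinarith
    have he : a (j + 1) = 1 / q j - 1 / q (j + 1) := by simp [ha_def]
    rw [he]
    have h23 : 2 / q (j + 1) = 3 / q (j + 1) - 1 / q (j + 1) := by ring
    linarith
  -- q grows at least like 3^n
  have hq3 : ∀ n, (3 : ℝ) ^ n ≤ q n := by
    intro n; induction n with
    | zero => simp [hq0]
    | succ n ih =>
      have hgn := hqgrow n
      have : (3 : ℝ) ^ (n + 1) = 3 * 3 ^ n := by ring
      nlinarith
  have hqtend : Filter.Tendsto (fun k => 1 / q k) Filter.atTop (nhds 0) := by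
    apply squeeze_zero (fun k => le_of_lt (one_div_pos.mpr (hqpos k)))
      (g := fun k => (1 / 3 : ℝ) ^ k)
    · intro k
      have h3 : (0 : ℝ) < 3 ^ k := by positivity
      have := one_div_le_one_div_of_le h3 (hq3 k)
      calc 1 / q k ≤ 1 / (3 : ℝ) ^ k := this
        _ = (1 / 3 : ℝ) ^ k := by rw [one_div_pow]
    · exact tendsto_pow_atTop_nhds_zero_of_lt_one (by norm_num) (by norm_num)
  -- the tail sums: ∑_{k > n} a k = 1/q n
  have htail : ∀ n : ℕ, HasSum (fun k => a (k + (n + 1))) (1 / q n) := by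
    intro n
    have key : ∀ N, ∑ i ∈ Finset.range N, a (i + (n + 1)) = 1 / q n - 1 / q (n + N) := by
      intro N
      have hterm : ∀ i, a (i + (n + 1)) = 1 / q (n + i) - 1 / q (n + (i + 1)) := by
        intro i
        have e1 : i + (n + 1) - 1 = n + i := by omega
        have e2 : i + (n + 1) = n + (i + 1) := by omega
        simp only [ha_def]
        rw [e1, e2]
      rw [Finset.sum_congr rfl fun i _ => hterm i]
      rw [Finset.sum_range_sub' (fun i => 1 / q (n + i))]
      simp
    have hsum : Summable (fun i => a (i + (n + 1))) := by
      apply summable_of_sum_range_le (c := 1 / q n) (fun i => hanneg _)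
      intro N
      rw [key N]
      have := le_of_lt (one_div_pos.mpr (hqpos (n + N)))
      linarith
    have hlim : Filter.Tendsto (fun N => ∑ i ∈ Finset.range N, a (i + (n + 1)))
        Filter.atTop (nhds (1 / q n)) := by
      have heq : (fun N => ∑ i ∈ Finset.range N, a (i + (n + 1)))
          = fun N => 1 / q n - 1 / q (n + N) := funext key
      rw [heq]
      have ht : Filter.Tendsto (fun N : ℕ => 1 / q (n + N)) Filter.atTop (nhds 0) := by
        have := hqtend.comp (Filter.tendsto_add_atTop_nat n)
        simpa [Function.comp_def, Nat.add_comm] using this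
      simpa using tendsto_const_nhds.sub ht
    have := tendsto_nhds_unique hsum.hasSum.tendsto_sum_nat hlim
    exact this ▸ hsum.hasSum
  have hsummable_a : Summable a := by
    have h0 := (htail 0).summable
    exact (summable_nat_add_iff 1).mp (by simpa using h0)
  set I := Set.Icc 1 m with hI_def
  set Xm := X ∩ I with hXm_def
  have hsY : Summable (Y.indicator a) := hsummable_a.indicator Y
  have hsX : Summable (Xm.indicator a) := hsummable_a.indicator Xm
  set g : ℕ → ℝ := fun k => Y.indicator a k - Xm.indicator a k with hg_def
  have hsg : Summable g := hsY.sub hsX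
  have hD : hK q Y - hK q Xm = ∑' k, g k := by
    simp only [hK, hg_def]
    exact (Summable.tsum_sub hsY hsX).symm
  have hgle : ∀ k, g k ≤ a k := by
    intro k
    have hu : Y.indicator a k ≤ a k := Set.indicator_le_self' (fun x _ => hanneg x) k
    have hl : 0 ≤ Xm.indicator a k := Set.indicator_nonneg (fun x _ => hanneg x) k
    simp only [hg_def]; linarith
  have hgge : ∀ k, -a k ≤ g k := by
    intro k
    have hu : Xm.indicator a k ≤ a k := Set.indicator_le_self' (fun x _ => hanneg x) k
    have hl : 0 ≤ Y.indicator a k := Set.indicator_nonneg (fun x _ => hanneg x) k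
    simp only [hg_def]; linarith
  by_contra hne
  have hex : ∃ k, ¬((k ∈ Y ∩ I) ↔ (k ∈ Xm)) := by
    by_contra hc
    push_neg at hc
    exact hne (Set.ext fun k => hc k)
  set n := Nat.find hex with hn_def
  have hn : ¬((n ∈ Y ∩ I) ↔ (n ∈ Xm)) := Nat.find_spec hex
  have hmin : ∀ k < n, ((k ∈ Y ∩ I) ↔ (k ∈ Xm)) := fun k hk =>
    not_not.mp (Nat.find_min hex hk)
  have hnI : n ∈ I := by
    by_cases hy : n ∈ Y ∩ I
    · exact hy.2
    · have hx : n ∈ Xm := by tauto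
      exact hx.2
  have hn1 : 1 ≤ n := hnI.1
  have hnm : n ≤ m := hnI.2
  have hg0 : ∀ k < n, g k = 0 := by
    intro k hk
    by_cases hkI : k ∈ I
    · have hiff := hmin k hk
      have hYX : (k ∈ Y) ↔ (k ∈ Xm) := by
        constructor
        · intro h; exact hiff.mp ⟨h, hkI⟩
        · intro h; exact (hiff.mpr h).1
      by_cases hky : k ∈ Y
      · simp [hg_def, Set.indicator_of_mem hky, Set.indicator_of_mem (hYX.mp hky)]
      · simp [hg_def, Set.indicator_of_notMem hky,
          Set.indicator_of_notMem (fun h => hky (hYX.mpr h))]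
    · have hk0 : k = 0 := by
        simp only [hI_def, Set.mem_Icc, not_and, not_le] at hkI
        omega
      subst hk0
      have h0Y : (0 : ℕ) ∉ Y := fun h => by have := hY 0 h; omega
      have h0X : (0 : ℕ) ∉ Xm := fun h => by
        have := h.2.1; omega
      simp [hg_def, Set.indicator_of_notMem h0Y, Set.indicator_of_notMem h0X]
  have hsplit : ∑' k, g k = (∑ i ∈ Finset.range (n + 1), g i) + ∑' i, g (i + (n + 1)) :=
    (Summable.sum_add_tsum_nat_add (n + 1) hsg).symm
  have hhead : ∑ i ∈ Finset.range (n + 1), g i = g n := by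
    rw [Finset.sum_range_succ,
      Finset.sum_eq_zero (fun i hi => hg0 i (Finset.mem_range.mp hi))]
    ring
  set T := ∑' i, g (i + (n + 1)) with hT_def
  have hsgt : Summable (fun i => g (i + (n + 1))) := (summable_nat_add_iff (n + 1)).mpr hsg
  have hsat : Summable (fun i => a (i + (n + 1))) := (htail n).summable
  have hTle : T ≤ 1 / q n := by
    rw [hT_def, ← (htail n).tsum_eq]
    exact Summable.tsum_le_tsum (fun i => hgle _) hsgt hsat
  have hTge : -(1 / q n) ≤ T := by
    have h' : ∑' i, (-(a (i + (n + 1)))) ≤ T :=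
      Summable.tsum_le_tsum (fun i => hgge _) hsat.neg hsgt
    rwa [tsum_neg, (htail n).tsum_eq] at h'
  have hqnm : 1 / q m ≤ 1 / q n := one_div_le_one_div_of_le (hqpos n) (hmono.monotone hnm)
  have hkey := hagt n hn1
  have h2q : 2 / q n = 2 * (1 / q n) := by ring
  have hkey' : 2 * (1 / q n) < a n := h2q ▸ hkey
  have hq1pos : 0 < 1 / q n := one_div_pos.mpr (hqpos n)
  have hDval : hK q Y - hK q Xm = g n + T := by rw [hD, hsplit, hhead]
  clear_value T
  by_cases hy : n ∈ Y ∩ I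
  · have hx : n ∉ Xm := fun h => hn (iff_of_true hy h)
    have hgn : g n = a n := by
      simp [hg_def, Set.indicator_of_mem hy.1, Set.indicator_of_notMem hx]
    have hbig : 1 / q m < hK q Y - hK q Xm := by
      rw [hDval, hgn]; linarith [hkey', hTge, hqnm]
    linarith
  · have hx : n ∈ Xm := by tauto
    have hny : n ∉ Y := fun h => hy ⟨h, hnI⟩
    have hgn : g n = -a n := by
      simp [hg_def, Set.indicator_of_notMem hny, Set.indicator_of_mem hx]
    have hneg : hK q Y - hK q Xm < 0 := by
      rw [hDval, hgn]
      have h5 : -a n < -(2 * (1 / q n)) := neg_lt_neg hkey'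
      calc -a n + T < -(2 * (1 / q n)) + 1 / q n := add_lt_add_of_lt_of_le h5 hTle
        _ = -(1 / q n) := by ring
        _ < 0 := neg_lt_zero.mpr hq1pos
    linarith
end

section
/- The truncation is the greatest level-m point below (the concrete description of the function e of Proposition 2.1): for every X ⊆ {1,2,3,…} and every m ∈ ℕ, h(X ∩ {1,…,m}) is the greatest element of the finite set {h(Y) : Y ⊆ {1,…,m}} among those elements that are ≤ h(X). -/
namespace Stmt9Aux

/-- The term function. -/
noncomputable def f (q : ℕ → ℝ) (n : ℕ) : ℝ := 1 / q (n - 1) - 1 / q n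

variable {q : ℕ → ℝ}

lemma hK_eq (A : Set ℕ) : hK q A = ∑' n, Set.indicator A (f q) n := rfl

lemma pow_le (hq0 : q 0 = 1) (hqpos : ∀ k, 0 < q k)
    (hqgrow : ∀ k, q (k + 1) > 3 * q k) : ∀ n, (3 : ℝ) ^ n ≤ q n := by
  intro n
  induction n with
  | zero => simp [hq0]
  | succ k ih =>
    have h1 := hqgrow k
    have h2 := hqpos k
    rw [pow_succ]
    nlinarith

lemma f_nonneg (hqpos : ∀ k, 0 < q k) (hqgrow : ∀ k, q (k + 1) > 3 * q k) (n : ℕ) :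
    0 ≤ f q n := by
  cases n with
  | zero => simp [f]
  | succ k =>
    have h1 := hqgrow k
    have h2 := hqpos k
    have h3 := hqpos (k + 1)
    have : 1 / q (k + 1) ≤ 1 / q k := one_div_le_one_div_of_le h2 (by linarith)
    simpa [f] using this

lemma one_div_le (hq0 : q 0 = 1) (hqpos : ∀ k, 0 < q k)
    (hqgrow : ∀ k, q (k + 1) > 3 * q k) (n : ℕ) :
    1 / q n ≤ (1 / 3 : ℝ) ^ n := by
  have h1 : (3 : ℝ) ^ n ≤ q n := pow_le hq0 hqpos hqgrow n
  have h2 : (0 : ℝ) < 3 ^ n := by positivity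
  rw [one_div_pow]
  exact one_div_le_one_div_of_le h2 h1

lemma f_summable (hq0 : q 0 = 1) (hqpos : ∀ k, 0 < q k)
    (hqgrow : ∀ k, q (k + 1) > 3 * q k) : Summable (f q) := by
  have hg : Summable (fun n : ℕ => 3 * (1 / 3 : ℝ) ^ n) :=
    (summable_geometric_of_lt_one (r := (1/3 : ℝ)) (by norm_num) (by norm_num)).mul_left 3
  refine Summable.of_nonneg_of_le (f_nonneg hqpos hqgrow) (fun n => ?_) hg
  have h1 : f q n ≤ 1 / q (n - 1) := by
    have := hqpos n
    have : 0 < 1 / q n := by positivity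
    simp only [f]
    linarith
  refine h1.trans ?_
  cases n with
  | zero =>
    simp only [Nat.zero_sub, hq0]
    norm_num
  | succ k =>
    have h2 : 1 / q k ≤ (1 / 3 : ℝ) ^ k := one_div_le hq0 hqpos hqgrow k
    have h3 : (3 : ℝ) * (1 / 3) ^ (k + 1) = (1 / 3) ^ k := by
      rw [pow_succ]; ring
    calc 1 / q (k + 1 - 1) = 1 / q k := by norm_num
      _ ≤ (1 / 3 : ℝ) ^ k := h2
      _ = 3 * (1 / 3) ^ (k + 1) := h3.symm

lemma tendsto_one_div (hq0 : q 0 = 1) (hqpos : ∀ k, 0 < q k)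
    (hqgrow : ∀ k, q (k + 1) > 3 * q k) (n₀ : ℕ) :
    Filter.Tendsto (fun N => 1 / q (N + n₀)) Filter.atTop (nhds 0) := by
  have hb : Filter.Tendsto (fun N : ℕ => (1 / 3 : ℝ) ^ N) Filter.atTop (nhds 0) :=
    tendsto_pow_atTop_nhds_zero_of_lt_one (by norm_num) (by norm_num)
  refine squeeze_zero (fun N => le_of_lt (one_div_pos.2 (hqpos _))) (fun N => ?_) hb
  calc 1 / q (N + n₀) ≤ (1 / 3 : ℝ) ^ (N + n₀) := one_div_le hq0 hqpos hqgrow _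
    _ ≤ (1 / 3 : ℝ) ^ N := pow_le_pow_of_le_one (by norm_num) (by norm_num) (Nat.le_add_right _ _)

lemma tail_sum (hq0 : q 0 = 1) (hqpos : ∀ k, 0 < q k)
    (hqgrow : ∀ k, q (k + 1) > 3 * q k) (n₀ : ℕ) :
    ∑' i, f q (i + (n₀ + 1)) = 1 / q n₀ := by
  have hfs := f_summable hq0 hqpos hqgrow
  have hs : Summable fun i => f q (i + (n₀ + 1)) := (summable_nat_add_iff _).2 hfs
  have hps : ∀ N, ∑ i ∈ Finset.range N, f q (i + (n₀ + 1)) = 1 / q n₀ - 1 / q (N + n₀) := by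
    intro N
    have h := Finset.sum_range_sub' (fun i => 1 / q (i + n₀)) N
    simp only [Nat.zero_add] at h
    rw [← h]
    refine Finset.sum_congr rfl fun i _ => ?_
    have e1 : i + (n₀ + 1) - 1 = i + n₀ := by omega
    have e2 : i + (n₀ + 1) = i + 1 + n₀ := by omega
    simp only [f]
    rw [e1, e2]
  have h1 : Filter.Tendsto (fun N => ∑ i ∈ Finset.range N, f q (i + (n₀ + 1)))
      Filter.atTop (nhds (∑' i, f q (i + (n₀ + 1)))) := hs.hasSum.tendsto_sum_nat
  have h2 : Filter.Tendsto (fun N => 1 / q n₀ - 1 / q (N + n₀)) Filter.atTop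
      (nhds (1 / q n₀ - 0)) :=
    Filter.Tendsto.sub tendsto_const_nhds (tendsto_one_div hq0 hqpos hqgrow n₀)
  have h3 := tendsto_nhds_unique h1 (by simpa only [hps] using h2)
  rw [h3]; ring

/-- Key lemma: if `n₀ ∈ B \ A` with `n₀ ≥ 1` and `A, B` agree below `n₀`,
then `hK q A < hK q B`. -/
lemma key (hq0 : q 0 = 1) (hqpos : ∀ k, 0 < q k)
    (hqgrow : ∀ k, q (k + 1) > 3 * q k) {A B : Set ℕ} {n₀ : ℕ} (hn₀ : 1 ≤ n₀)
    (hA : n₀ ∉ A) (hB : n₀ ∈ B) (hagree : ∀ k < n₀, (k ∈ A ↔ k ∈ B)) :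
    hK q A < hK q B := by
  have hfs := f_summable hq0 hqpos hqgrow
  have hf0 := f_nonneg hqpos hqgrow
  have hAs : Summable (Set.indicator A (f q)) := hfs.indicator A
  have hBs : Summable (Set.indicator B (f q)) := hfs.indicator B
  have hsplitA := Summable.sum_add_tsum_nat_add (n₀ + 1) hAs
  have hsplitB := Summable.sum_add_tsum_nat_add (n₀ + 1) hBs
  rw [hK_eq, ← hsplitA, hK_eq, ← hsplitB]
  -- partial sums
  have hSA : ∑ i ∈ Finset.range (n₀ + 1), Set.indicator A (f q) i
      = ∑ i ∈ Finset.range n₀, Set.indicator A (f q) i := by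
    rw [Finset.sum_range_succ, Set.indicator_of_notMem hA, add_zero]
  have hSB : ∑ i ∈ Finset.range (n₀ + 1), Set.indicator B (f q) i
      = (∑ i ∈ Finset.range n₀, Set.indicator A (f q) i) + f q n₀ := by
    rw [Finset.sum_range_succ, Set.indicator_of_mem hB]
    congr 1
    refine Finset.sum_congr rfl fun i hi => ?_
    have hi' := Finset.mem_range.1 hi
    by_cases h : i ∈ A
    · rw [Set.indicator_of_mem h, Set.indicator_of_mem ((hagree i hi').1 h)]
    · rw [Set.indicator_of_notMem h,
        Set.indicator_of_notMem (fun hb => h ((hagree i hi').2 hb))]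
  -- tails
  have hTA : (∑' i, Set.indicator A (f q) (i + (n₀ + 1))) ≤ 1 / q n₀ := by
    rw [← tail_sum hq0 hqpos hqgrow n₀]
    refine Summable.tsum_le_tsum (fun i => ?_) ((summable_nat_add_iff _).2 hAs)
      ((summable_nat_add_iff _).2 hfs)
    exact Set.indicator_le_self' (fun x _ => hf0 x) _
  have hTB : (0 : ℝ) ≤ ∑' i, Set.indicator B (f q) (i + (n₀ + 1)) :=
    tsum_nonneg fun i => Set.indicator_nonneg (fun x _ => hf0 x) _
  -- gap
  have hgap : 1 / q n₀ < f q n₀ := by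
    obtain ⟨k, rfl⟩ : ∃ k, n₀ = k + 1 := ⟨n₀ - 1, by omega⟩
    have h1 := hqgrow k
    have h2 := hqpos k
    have h3 := hqpos (k + 1)
    have h4 : 2 / q (k + 1) < 1 / q k := by
      rw [div_lt_div_iff₀ h3 h2]; nlinarith
    have e : f q (k + 1) = 1 / q k - 1 / q (k + 1) := by simp [f]
    rw [e]
    rw [div_eq_mul_one_div] at h4
    linarith
  rw [hSA, hSB]
  linarith

end Stmt9Aux

open Stmt9Aux in
/-- The truncation `h(X ∩ {1,…,m})` is the greatest element of
`{h(Y) : h ⊆ {1,…,m}}` among those elements `≤ h(X)`. -/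
theorem stmt_9 (q : ℕ → ℝ) (hq0 : q 0 = 1) (hqpos : ∀ k, 0 < q k)
    (hqgrow : ∀ k, q (k + 1) > 3 * q k)
    (X : Set ℕ) (hX : ∀ n ∈ X, 1 ≤ n) (m : ℕ) :
    IsGreatest {z : ℝ | (∃ Y : Set ℕ, Y ⊆ Set.Icc 1 m ∧ hK q Y = z) ∧ z ≤ hK q X}
      (hK q (X ∩ Set.Icc 1 m)) := by
  classical
  have hfs := f_summable hq0 hqpos hqgrow
  have hf0 := f_nonneg hqpos hqgrow
  constructor
  · refine ⟨⟨X ∩ Set.Icc 1 m, Set.inter_subset_right, rfl⟩, ?_⟩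
    rw [hK_eq, hK_eq]
    refine Summable.tsum_le_tsum (fun n => ?_) (hfs.indicator _) (hfs.indicator _)
    exact Set.indicator_le_indicator_of_subset Set.inter_subset_left hf0 n
  · rintro z ⟨⟨Y, hYsub, rfl⟩, hzX⟩
    by_contra hlt
    push_neg at hlt
    set Z := X ∩ Set.Icc 1 m with hZdef
    have hex : ∃ n, (n ∈ Y ∧ n ∉ Z) ∨ (n ∉ Y ∧ n ∈ Z) := by
      by_contra hc
      push_neg at hc
      have hYZ : Y = Z := by
        ext n
        have := hc n
        tauto
      rw [hYZ] at hlt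
      exact lt_irrefl _ hlt
    set n₀ := Nat.find hex with hn₀def
    have hPn₀ := Nat.find_spec hex
    have hmin : ∀ k < n₀, (k ∈ Y ↔ k ∈ Z) := by
      intro k hk
      have := Nat.find_min hex hk
      tauto
    rcases hPn₀ with ⟨hY₀, hZ₀⟩ | ⟨hY₀, hZ₀⟩
    · -- n₀ ∈ Y, n₀ ∉ Z : then hK X < hK Y, contradicting hzX
      have hIcc : n₀ ∈ Set.Icc 1 m := hYsub hY₀
      have hX₀ : n₀ ∉ X := fun h => hZ₀ ⟨h, hIcc⟩
      have hagree : ∀ k < n₀, (k ∈ X ↔ k ∈ Y) := by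
        intro k hk
        have h1 := hmin k hk
        constructor
        · intro hkX
          have hk1 : 1 ≤ k := hX k hkX
          have hkm : k ≤ m := le_trans (le_of_lt hk) hIcc.2
          exact h1.2 ⟨hkX, hk1, hkm⟩
        · intro hkY
          exact (h1.1 hkY).1
      have := key hq0 hqpos hqgrow hIcc.1 hX₀ hY₀ hagree
      linarith
    · -- n₀ ∉ Y, n₀ ∈ Z : then hK Y < hK Z, contradicting hlt
      have h1 : 1 ≤ n₀ := hZ₀.2.1
      have := key hq0 hqpos hqgrow h1 hY₀ hZ₀ hmin
      linarith
end

section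
/- Complementary intervals of K (the concrete form of Lemma 4.11): for every m ∈ ℕ and every Y ⊆ {1,…,m}, the open interval ( h(Y) + 1/q (m+1), h(Y) + 1/q m − 1/q (m+1) ) is disjoint from K, while both of its endpoints h(Y) + 1/q (m+1) and h(Y) + 1/q m − 1/q (m+1) belong to K. -/
open Filter Finset

namespace Stmt11Aux

noncomputable def a (q : ℕ → ℝ) : ℕ → ℝ := fun n => 1 / q (n - 1) - 1 / q n

lemma hK_eq (q : ℕ → ℝ) (X : Set ℕ) : hK q X = ∑' n, X.indicator (a q) n := rfl

variable {q : ℕ → ℝ} (hq0 : q 0 = 1) (hqpos : ∀ k, 0 < q k)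
  (hqgrow : ∀ k, q (k + 1) > 3 * q k)

include hqpos hqgrow in
lemma qmono : Monotone q := by
  apply monotone_nat_of_le_succ
  intro n
  nlinarith [hqpos n, hqgrow n]

include hq0 hqpos hqgrow in
lemma inv_q_le (n : ℕ) : 1 / q n ≤ (1 / 3 : ℝ) ^ n := by
  induction n with
  | zero => simp [hq0]
  | succ k ih =>
    have h1 : 1 / q (k + 1) ≤ 1 / (3 * q k) :=
      one_div_le_one_div_of_le (by have := hqpos k; positivity) (le_of_lt (hqgrow k))
    have h2 : 1 / (3 * q k) = (1 / 3 : ℝ) * (1 / q k) := by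
      field_simp
    rw [pow_succ]
    calc 1 / q (k + 1) ≤ (1 / 3 : ℝ) * (1 / q k) := by rw [← h2]; exact h1
      _ ≤ (1 / 3 : ℝ) * (1 / 3 : ℝ) ^ k := by
          have := ih
          nlinarith [ih]
      _ = (1 / 3 : ℝ) ^ k * (1 / 3) := by ring

include hqpos hqgrow in
lemma a_nonneg (n : ℕ) : 0 ≤ a q n := by
  have h : q (n - 1) ≤ q n := qmono hqpos hqgrow (Nat.sub_le n 1)
  have h2 : 1 / q n ≤ 1 / q (n - 1) := one_div_le_one_div_of_le (hqpos (n - 1)) h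
  simp only [a]
  linarith

include hq0 hqpos hqgrow in
lemma a_le (n : ℕ) : a q n ≤ 3 * (1 / 3 : ℝ) ^ n := by
  cases n with
  | zero => simp [a, hq0]
  | succ k =>
    have h1 : a q (k + 1) ≤ 1 / q k := by
      have : 0 < 1 / q (k + 1) := by have := hqpos (k + 1); positivity
      simp only [a, Nat.add_sub_cancel]
      linarith
    have h2 : (1 / 3 : ℝ) ^ k = 3 * (1 / 3 : ℝ) ^ (k + 1) := by
      rw [pow_succ]; ring
    calc a q (k + 1) ≤ 1 / q k := h1
      _ ≤ (1 / 3 : ℝ) ^ k := inv_q_le hq0 hqpos hqgrow k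
      _ = 3 * (1 / 3 : ℝ) ^ (k + 1) := h2

include hq0 hqpos hqgrow in
lemma summable_a : Summable (a q) :=
  Summable.of_nonneg_of_le (a_nonneg hqpos hqgrow) (a_le hq0 hqpos hqgrow)
    ((summable_geometric_of_lt_one (by norm_num) (by norm_num)).mul_left 3)

include hq0 hqpos hqgrow in
lemma summable_ind (X : Set ℕ) : Summable (X.indicator (a q)) :=
  (summable_a hq0 hqpos hqgrow).indicator X

include hq0 hqpos hqgrow in
lemma tendsto_inv_q : Tendsto (fun n => 1 / q n) atTop (nhds 0) :=
  squeeze_zero (fun n => by have := hqpos n; positivity) (inv_q_le hq0 hqpos hqgrow)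
    (tendsto_pow_atTop_nhds_zero_of_lt_one (by norm_num) (by norm_num))

include hq0 hqpos hqgrow in
lemma hK_tail (k : ℕ) : hK q {n | k + 1 ≤ n} = 1 / q k := by
  set f := ({n | k + 1 ≤ n} : Set ℕ).indicator (a q) with hf
  have hsum : Summable f := summable_ind hq0 hqpos hqgrow _
  have h0 : ∑ i ∈ Finset.range (k + 1), f i = 0 := by
    apply Finset.sum_eq_zero
    intro i hi
    have : i < k + 1 := Finset.mem_range.mp hi
    exact Set.indicator_of_notMem (by simpa using Nat.not_le.mpr this) _
  have hshift : ∀ i : ℕ, f (i + (k + 1)) = a q (i + (k + 1)) := fun i =>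
    Set.indicator_of_mem (by simp only [Set.mem_setOf_eq]; omega) _
  have key : ∑' i : ℕ, f (i + (k + 1)) = 1 / q k := by
    have hsum2 : Summable fun i => f (i + (k + 1)) :=
      (summable_nat_add_iff (k + 1)).mpr hsum
    have hpart : ∀ N : ℕ, ∑ i ∈ Finset.range N, f (i + (k + 1)) = 1 / q k - 1 / q (k + N) := by
      intro N
      induction N with
      | zero => simp
      | succ M ih =>
        rw [Finset.sum_range_succ, ih, hshift]
        simp only [a]
        have e1 : M + (k + 1) - 1 = k + M := by omega
        have e2 : M + (k + 1) = k + (M + 1) := by omega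
        rw [e1, e2]
        ring
    have htend : Tendsto (fun N => ∑ i ∈ Finset.range N, f (i + (k + 1))) atTop
        (nhds (1 / q k)) := by
      simp only [hpart]
      have : Tendsto (fun N => 1 / q (k + N)) atTop (nhds 0) := by
        have h := (tendsto_inv_q hq0 hqpos hqgrow).comp (tendsto_add_atTop_nat k)
        simpa [Function.comp_def, Nat.add_comm] using h
      simpa using tendsto_const_nhds.sub this
    exact ((hsum2.hasSum_iff_tendsto_nat).mpr htend).tsum_eq
  calc hK q {n | k + 1 ≤ n} = ∑' n, f n := rfl
    _ = ∑ i ∈ Finset.range (k + 1), f i + ∑' i : ℕ, f (i + (k + 1)) :=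
        (Summable.sum_add_tsum_nat_add (k + 1) hsum).symm
    _ = 1 / q k := by rw [h0, key, zero_add]

include hq0 hqpos hqgrow in
lemma hK_mono {X Z : Set ℕ} (h : X ⊆ Z) : hK q X ≤ hK q Z := by
  apply Summable.tsum_le_tsum _ (summable_ind hq0 hqpos hqgrow X) (summable_ind hq0 hqpos hqgrow Z)
  intro n
  exact Set.indicator_le_indicator_of_subset h (fun n => a_nonneg hqpos hqgrow n) n

include hq0 hqpos hqgrow in
lemma hK_union {X Z : Set ℕ} (h : Disjoint X Z) : hK q (X ∪ Z) = hK q X + hK q Z := by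
  simp only [hK_eq, Set.indicator_union_of_disjoint h]
  exact Summable.tsum_add (summable_ind hq0 hqpos hqgrow X) (summable_ind hq0 hqpos hqgrow Z)

lemma hK_singleton (j : ℕ) : hK q {j} = a q j := by
  rw [hK_eq]
  rw [tsum_eq_single j (fun b hb => Set.indicator_of_notMem (by simpa using hb) _)]
  exact Set.indicator_of_mem rfl _

include hq0 hqpos hqgrow in
lemma hK_split (X : Set ℕ) (j : ℕ) :
    hK q X = hK q (X ∩ {n | n < j}) + hK q (X ∩ {n | j ≤ n}) := by
  have hc : ({n : ℕ | j ≤ n} : Set ℕ) = {n | n < j}ᶜ := by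
    ext n; simp [not_lt]
  have hd : Disjoint (X ∩ {n | n < j}) (X ∩ {n | j ≤ n}) := by
    rw [hc]
    exact Disjoint.mono Set.inter_subset_right Set.inter_subset_right
      disjoint_compl_right
  have hu : X ∩ {n | n < j} ∪ X ∩ {n | j ≤ n} = X := by
    rw [hc]; exact Set.inter_union_compl X _
  conv_lhs => rw [← hu]
  exact hK_union hq0 hqpos hqgrow hd

include hqpos hqgrow in
lemma hK_nonneg (X : Set ℕ) : 0 ≤ hK q X := by
  rw [hK_eq]
  exact tsum_nonneg fun n => Set.indicator_nonneg (fun i _ => a_nonneg hqpos hqgrow i) n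

end Stmt11Aux

open Stmt11Aux in
/-- Complementary intervals of `K`: for `Y ⊆ {1,…,m}`, the open interval
`(h(Y) + 1/q(m+1), h(Y) + 1/q m - 1/q(m+1))` is disjoint from `K`, and both of
its endpoints belong to `K`. -/
theorem stmt_11 (q : ℕ → ℝ) (hq0 : q 0 = 1) (hqpos : ∀ k, 0 < q k)
    (hqgrow : ∀ k, q (k + 1) > 3 * q k)
    (m : ℕ) (Y : Set ℕ) (hY : Y ⊆ Set.Icc 1 m) :
    Set.Ioo (hK q Y + 1 / q (m + 1)) (hK q Y + 1 / q m - 1 / q (m + 1)) ∩ Kset q = ∅ ∧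
    hK q Y + 1 / q (m + 1) ∈ Kset q ∧
    hK q Y + 1 / q m - 1 / q (m + 1) ∈ Kset q := by
  classical
  have ha1 : a q (m + 1) = 1 / q m - 1 / q (m + 1) := by
    simp only [a, Nat.add_sub_cancel]
  -- strict inequality tool: 1/q j < (1/3) * 1/q (j-1) for j ≥ 1
  have hkey : ∀ j : ℕ, 1 ≤ j → 1 / q j < (1 / 3) * (1 / q (j - 1)) := by
    intro j hj
    have h3 : 3 * q (j - 1) < q j := by
      have := hqgrow (j - 1)
      have hj1 : j - 1 + 1 = j := by omega
      rw [hj1] at this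
      linarith
    have hpos3 : (0:ℝ) < 3 * q (j - 1) := by have := hqpos (j-1); positivity
    have := one_div_lt_one_div_of_lt hpos3 h3
    calc 1 / q j < 1 / (3 * q (j - 1)) := this
      _ = (1 / 3) * (1 / q (j - 1)) := by field_simp
  refine ⟨?_, ?_, ?_⟩
  · -- disjointness
    rw [Set.eq_empty_iff_forall_notMem]
    rintro x ⟨⟨hx1, hx2⟩, X, hXpos, rfl⟩
    by_cases hA : ∀ n, n ≤ m → (n ∈ X ↔ n ∈ Y)
    · -- X agrees with Y up to m
      have hsplit : hK q X = hK q (X ∩ {n | n < m + 1}) + hK q (X ∩ {n | m + 1 ≤ n}) :=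
        hK_split hq0 hqpos hqgrow X (m + 1)
      have hXY : X ∩ {n | n < m + 1} = Y := by
        ext n
        simp only [Set.mem_inter_iff, Set.mem_setOf_eq]
        constructor
        · rintro ⟨hn, hn2⟩
          exact ((hA n (by omega)).mp hn)
        · intro hn
          have := hY hn
          simp only [Set.mem_Icc] at this
          exact ⟨(hA n this.2).mpr hn, by omega⟩
      rw [hXY] at hsplit
      by_cases hm1 : m + 1 ∈ X
      · -- elements include m+1: too big
        have : hK q {m + 1} ≤ hK q (X ∩ {n | m + 1 ≤ n}) :=
          hK_mono hq0 hqpos hqgrow (by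
            intro n hn
            simp only [Set.mem_singleton_iff] at hn
            subst hn
            exact ⟨hm1, Set.mem_setOf_eq ▸ le_refl _⟩)
        rw [hK_singleton, ha1] at this
        linarith
      · -- no m+1: tail too small
        have hsub : X ∩ {n | m + 1 ≤ n} ⊆ {n | m + 2 ≤ n} := by
          intro n hn
          rcases hn with ⟨hnX, hnm⟩
          simp only [Set.mem_setOf_eq] at hnm ⊢
          rcases Nat.eq_or_lt_of_le hnm with h | h
          · exact absurd (h ▸ hnX) hm1
          · omega
        have := hK_mono hq0 hqpos hqgrow hsub
        rw [show m + 2 = (m + 1) + 1 from rfl, hK_tail hq0 hqpos hqgrow (m + 1)] at this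
        linarith
    · -- X and Y differ below m: find least difference
      push_neg at hA
      obtain ⟨n0, hn0m, hn0⟩ := hA
      have hex : ∃ n, n ≤ m ∧ ¬(n ∈ X ↔ n ∈ Y) := ⟨n0, hn0m, by tauto⟩
      set j := Nat.find hex with hj
      obtain ⟨hjm, hjd⟩ := Nat.find_spec hex
      have hmin : ∀ i, i < j → (i ∈ X ↔ i ∈ Y) := by
        intro i hi
        by_contra h
        exact Nat.find_min hex hi ⟨by omega, h⟩
      have hCeq : X ∩ {n | n < j} = Y ∩ {n | n < j} := by
        ext n
        simp only [Set.mem_inter_iff, Set.mem_setOf_eq]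
        constructor
        · rintro ⟨h1, h2⟩; exact ⟨(hmin n h2).mp h1, h2⟩
        · rintro ⟨h1, h2⟩; exact ⟨(hmin n h2).mpr h1, h2⟩
      have hsplitX : hK q X = hK q (X ∩ {n | n < j}) + hK q (X ∩ {n | j ≤ n}) :=
        hK_split hq0 hqpos hqgrow X j
      have hsplitY : hK q Y = hK q (Y ∩ {n | n < j}) + hK q (Y ∩ {n | j ≤ n}) :=
        hK_split hq0 hqpos hqgrow Y j
      rw [hCeq] at hsplitX
      set c := hK q (Y ∩ {n | n < j})
      by_cases hjX : j ∈ X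
      · -- j ∈ X, j ∉ Y
        have hjY : j ∉ Y := fun h => hjd ⟨fun _ => h, fun _ => hjX⟩
        have hj1 : 1 ≤ j := hXpos j hjX
        -- hK X ≥ c + a j
        have h1 : hK q {j} ≤ hK q (X ∩ {n | j ≤ n}) :=
          hK_mono hq0 hqpos hqgrow (by
            intro n hn
            simp only [Set.mem_singleton_iff] at hn
            subst hn
            exact ⟨hjX, Set.mem_setOf_eq ▸ le_refl _⟩)
        rw [hK_singleton] at h1
        -- hK Y ≤ c + 1/q j
        have hsub : Y ∩ {n | j ≤ n} ⊆ {n | j + 1 ≤ n} := by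
          rintro n ⟨hnY, hnj⟩
          simp only [Set.mem_setOf_eq] at hnj ⊢
          rcases Nat.eq_or_lt_of_le hnj with h | h
          · exact absurd (h ▸ hnY) hjY
          · omega
        have h2 : hK q (Y ∩ {n | j ≤ n}) ≤ 1 / q j := by
          have := hK_mono hq0 hqpos hqgrow hsub
          rwa [hK_tail hq0 hqpos hqgrow j] at this
        -- arithmetic
        have haj : a q j = 1 / q (j - 1) - 1 / q j := rfl
        have hqm : 1 / q m ≤ 1 / q j :=
          one_div_le_one_div_of_le (hqpos j) (qmono hqpos hqgrow hjm)
        have hk := hkey j hj1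
        have hqm1pos : 0 < 1 / q (m + 1) := by have := hqpos (m+1); positivity
        have hqj1pos : 0 < 1 / q (j - 1) := by have := hqpos (j-1); positivity
        -- hK X ≥ c + a j,  hK Y ≤ c + 1/q j, a j - 1/q j > 1/q j ≥ 1/q m
        -- so hK X > hK Y + 1/q m > right endpoint; contradiction with hx2
        have : hK q X ≥ c + a q j := by rw [hsplitX]; linarith
        rw [haj] at this
        have hYle : hK q Y ≤ c + 1 / q j := by rw [hsplitY]; linarith
        linarith
      · -- j ∉ X, j ∈ Y
        have hjY : j ∈ Y := by
          by_contra h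
          exact hjd ⟨fun hx => absurd hx hjX, fun hy => absurd hy h⟩
        have hj1 : 1 ≤ j := (hY hjY).1
        have h1 : hK q {j} ≤ hK q (Y ∩ {n | j ≤ n}) :=
          hK_mono hq0 hqpos hqgrow (by
            intro n hn
            simp only [Set.mem_singleton_iff] at hn
            subst hn
            exact ⟨hjY, Set.mem_setOf_eq ▸ le_refl _⟩)
        rw [hK_singleton] at h1
        have hsub : X ∩ {n | j ≤ n} ⊆ {n | j + 1 ≤ n} := by
          rintro n ⟨hnX, hnj⟩
          simp only [Set.mem_setOf_eq] at hnj ⊢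
          rcases Nat.eq_or_lt_of_le hnj with h | h
          · exact absurd (h ▸ hnX) hjX
          · omega
        have h2 : hK q (X ∩ {n | j ≤ n}) ≤ 1 / q j := by
          have := hK_mono hq0 hqpos hqgrow hsub
          rwa [hK_tail hq0 hqpos hqgrow j] at this
        have haj : a q j = 1 / q (j - 1) - 1 / q j := rfl
        have hk := hkey j hj1
        have hqm1pos : 0 < 1 / q (m + 1) := by have := hqpos (m+1); positivity
        have hqj1pos : 0 < 1 / q (j - 1) := by have := hqpos (j-1); positivity
        -- hK Y ≥ c + a j, hK X ≤ c + 1/q j, a j > 2/q j > 1/q j so hK X < hK Y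
        have hYge : hK q Y ≥ c + a q j := by rw [hsplitY]; linarith
        rw [haj] at hYge
        have hXle : hK q X ≤ c + 1 / q j := by rw [hsplitX]; linarith
        linarith
  · -- left endpoint: Y ∪ {n | m+2 ≤ n}
    refine ⟨Y ∪ {n | m + 2 ≤ n}, ?_, ?_⟩
    · intro n hn
      rcases hn with h | h
      · exact (hY h).1
      · simp only [Set.mem_setOf_eq] at h; omega
    · have hd : Disjoint Y {n : ℕ | m + 2 ≤ n} := by
        rw [Set.disjoint_left]
        intro n hn hn2
        have := (hY hn).2
        simp only [Set.mem_setOf_eq] at hn2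
        omega
      rw [hK_union hq0 hqpos hqgrow hd,
        show m + 2 = (m + 1) + 1 from rfl, hK_tail hq0 hqpos hqgrow (m + 1)]
  · -- right endpoint: Y ∪ {m+1}
    refine ⟨Y ∪ {m + 1}, ?_, ?_⟩
    · intro n hn
      rcases hn with h | h
      · exact (hY h).1
      · simp only [Set.mem_singleton_iff] at h; omega
    · have hd : Disjoint Y ({m + 1} : Set ℕ) := by
        rw [Set.disjoint_left]
        intro n hn hn2
        have := (hY hn).2
        simp only [Set.mem_singleton_iff] at hn2
        omega
      rw [hK_union hq0 hqpos hqgrow hd, hK_singleton, ha1]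
      ring
end

section
/- Classification of complementary intervals of K (the concrete content of Lemma 2.2 on the lengths of complementary intervals): if x, y ∈ K with x < y and the open interval (x, y) is disjoint from K, then there exist a unique m ∈ ℕ and a unique Y ⊆ {1,…,m} such that x = h(Y) + 1/q (m+1) and y = h(Y) + 1/q m − 1/q (m+1); in particular the length y − x equals 1/q m − 2/q (m+1), and this length determines m uniquely. -/
namespace Stmt12

noncomputable def d (q : ℕ → ℝ) (n : ℕ) : ℝ := 1 / q (n - 1) - 1 / q n

variable {q : ℕ → ℝ}

lemma d_zero : d q 0 = 0 := by simp [d]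

lemma q_mono (hqpos : ∀ k, 0 < q k) (hqgrow : ∀ k, q (k + 1) > 3 * q k) :
    Monotone q := by
  apply monotone_nat_of_le_succ
  intro n
  nlinarith [hqgrow n, hqpos n]

lemma d_nonneg (hqpos : ∀ k, 0 < q k) (hqgrow : ∀ k, q (k + 1) > 3 * q k) (n : ℕ) :
    0 ≤ d q n := by
  cases n with
  | zero => simp [d]
  | succ k =>
    have h : q k ≤ q (k+1) := q_mono hqpos hqgrow (Nat.le_succ k)
    have := hqpos k
    simp only [d, Nat.succ_sub_one]
    have : 1 / q (k+1) ≤ 1 / q k := one_div_le_one_div_of_le this h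
    linarith

lemma q_ge (hq0 : q 0 = 1) (hqpos : ∀ k, 0 < q k) (hqgrow : ∀ k, q (k + 1) > 3 * q k)
    (n : ℕ) : (3:ℝ)^n ≤ q n := by
  induction n with
  | zero => simp [hq0]
  | succ k ih =>
    have := hqgrow k
    have := hqpos k
    calc (3:ℝ)^(k+1) = 3 * 3^k := by ring
    _ ≤ 3 * q k := by nlinarith [pow_pos (by norm_num : (0:ℝ) < 3) k]
    _ ≤ q (k+1) := le_of_lt (hqgrow k)

lemma one_div_q_le (hq0 : q 0 = 1) (hqpos : ∀ k, 0 < q k) (hqgrow : ∀ k, q (k + 1) > 3 * q k)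
    (n : ℕ) : 1 / q n ≤ (1/3:ℝ)^n := by
  have h := q_ge hq0 hqpos hqgrow n
  have h3 : (0:ℝ) < 3^n := pow_pos (by norm_num) n
  calc 1 / q n ≤ 1 / (3:ℝ)^n := one_div_le_one_div_of_le h3 h
  _ = (1/3:ℝ)^n := by rw [one_div_pow]

lemma d_summable (hq0 : q 0 = 1) (hqpos : ∀ k, 0 < q k) (hqgrow : ∀ k, q (k + 1) > 3 * q k) :
    Summable (d q) := by
  have hg : Summable (fun n : ℕ => 3 * (1/3:ℝ)^n) :=
    (summable_geometric_of_lt_one (by norm_num) (by norm_num)).mul_left 3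
  have hle : ∀ n, d q n ≤ 3 * (1/3:ℝ)^n := by
    intro n
    cases n with
    | zero => simp [d]
    | succ k =>
      have h1 : 1 / q (k+1) ≥ 0 := le_of_lt (by exact one_div_pos.mpr (hqpos (k+1)))
      have h2 : 1 / q k ≤ (1/3:ℝ)^k := one_div_q_le hq0 hqpos hqgrow k
      simp only [d, Nat.succ_sub_one]
      have : (3:ℝ) * (1/3)^(k+1) = (1/3)^k := by
        rw [pow_succ]; ring
      linarith
  exact Summable.of_nonneg_of_le (d_nonneg hqpos hqgrow) hle hg

lemma ind_summable (hq0 : q 0 = 1) (hqpos : ∀ k, 0 < q k) (hqgrow : ∀ k, q (k + 1) > 3 * q k)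
    (X : Set ℕ) : Summable (Set.indicator X (d q)) :=
  (d_summable hq0 hqpos hqgrow).indicator X


lemma sum_range_tail (m N : ℕ) :
    ∑ n ∈ Finset.range N, Set.indicator (Set.Ici (m+1)) (d q) n
      = 1 / q m - 1 / q (max m (N - 1)) := by
  induction N with
  | zero => simp
  | succ N ih =>
    rw [Finset.sum_range_succ, ih]
    rcases Nat.lt_or_ge N (m+1) with h | h
    · rw [Set.indicator_of_notMem (by simp only [Set.mem_Ici]; omega)]
      have h1 : max m (N-1) = m := Nat.max_eq_left (by omega)
      have h2 : max m (N+1-1) = m := Nat.max_eq_left (by omega)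
      rw [h1, h2]; ring
    · rw [Set.indicator_of_mem (by simp only [Set.mem_Ici]; omega)]
      have h1 : max m (N-1) = N-1 := Nat.max_eq_right (by omega)
      have h2 : max m (N+1-1) = N := Nat.max_eq_right (by omega)
      rw [h1, h2]
      simp only [d]
      ring

lemma tendsto_one_div_q (hq0 : q 0 = 1) (hqpos : ∀ k, 0 < q k)
    (hqgrow : ∀ k, q (k + 1) > 3 * q k) :
    Filter.Tendsto (fun n => 1 / q n) Filter.atTop (nhds 0) := by
  apply squeeze_zero (fun n => le_of_lt (one_div_pos.mpr (hqpos n)))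
    (one_div_q_le hq0 hqpos hqgrow)
  exact tendsto_pow_atTop_nhds_zero_of_lt_one (by norm_num) (by norm_num)

lemma hasSum_tail (hq0 : q 0 = 1) (hqpos : ∀ k, 0 < q k)
    (hqgrow : ∀ k, q (k + 1) > 3 * q k) (m : ℕ) :
    HasSum (Set.indicator (Set.Ici (m+1)) (d q)) (1 / q m) := by
  have hs := ind_summable hq0 hqpos hqgrow (Set.Ici (m+1))
  have h1 := hs.hasSum.tendsto_sum_nat
  have hmax : Filter.Tendsto (fun N : ℕ => max m (N-1)) Filter.atTop Filter.atTop := by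
    apply Filter.tendsto_atTop_atTop.mpr
    intro b
    exact ⟨b+1, fun a ha => le_max_of_le_right (by omega)⟩
  have h2 : Filter.Tendsto
      (fun N => ∑ n ∈ Finset.range N, Set.indicator (Set.Ici (m+1)) (d q) n)
      Filter.atTop (nhds (1 / q m)) := by
    simp only [sum_range_tail]
    have := ((tendsto_one_div_q hq0 hqpos hqgrow).comp hmax).const_sub (1 / q m)
    simpa using this
  have := tendsto_nhds_unique h1 h2
  rw [← this]
  exact hs.hasSum

lemma hK_eq (X : Set ℕ) : hK q X = ∑' n, Set.indicator X (d q) n := rfl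

lemma hK_tail (hq0 : q 0 = 1) (hqpos : ∀ k, 0 < q k)
    (hqgrow : ∀ k, q (k + 1) > 3 * q k) (m : ℕ) :
    hK q (Set.Ici (m+1)) = 1 / q m :=
  (hasSum_tail hq0 hqpos hqgrow m).tsum_eq

lemma hK_singleton (n : ℕ) : hK q {n} = d q n := by
  rw [hK_eq]
  have : Set.indicator ({n} : Set ℕ) (d q) = fun k => if k = n then d q n else 0 := by
    funext k
    by_cases h : k = n <;> simp [h]
  rw [this]
  exact tsum_ite_eq n (fun _ => d q n)

lemma hK_mono (hq0 : q 0 = 1) (hqpos : ∀ k, 0 < q k)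
    (hqgrow : ∀ k, q (k + 1) > 3 * q k) {X X' : Set ℕ} (h : X ⊆ X') :
    hK q X ≤ hK q X' := by
  rw [hK_eq, hK_eq]
  exact Summable.tsum_le_tsum
    (fun n => Set.indicator_le_indicator_of_subset h (fun a => d_nonneg hqpos hqgrow a) n)
    (ind_summable hq0 hqpos hqgrow X) (ind_summable hq0 hqpos hqgrow X')

lemma hK_union (hq0 : q 0 = 1) (hqpos : ∀ k, 0 < q k)
    (hqgrow : ∀ k, q (k + 1) > 3 * q k) {A B : Set ℕ} (h : Disjoint A B) :
    hK q (A ∪ B) = hK q A + hK q B := by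
  rw [hK_eq, hK_eq, hK_eq]
  rw [← Summable.tsum_add (ind_summable hq0 hqpos hqgrow A) (ind_summable hq0 hqpos hqgrow B)]
  congr 1
  funext n
  rw [Set.indicator_union_of_disjoint h]

lemma hK_split (hq0 : q 0 = 1) (hqpos : ∀ k, 0 < q k)
    (hqgrow : ∀ k, q (k + 1) > 3 * q k) (X : Set ℕ) (m : ℕ) :
    hK q X = hK q (X ∩ Set.Icc 1 m) + hK q (X ∩ Set.Ici (m+1)) := by
  rw [hK_eq, hK_eq, hK_eq]
  rw [← Summable.tsum_add (ind_summable hq0 hqpos hqgrow _) (ind_summable hq0 hqpos hqgrow _)]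
  congr 1
  funext n
  have hd0 : d q 0 = 0 := d_zero
  rcases eq_or_ne n 0 with rfl | hn0
  · simp [Set.indicator_apply, hd0]
  · by_cases hX : n ∈ X
    · rcases le_or_gt n m with hle | hgt
      · rw [Set.indicator_of_mem hX, Set.indicator_of_mem (by exact ⟨hX, by omega, hle⟩),
          Set.indicator_of_notMem (by simp only [Set.mem_inter_iff, Set.mem_Ici]; omega)]
        ring
      · rw [Set.indicator_of_mem hX,
          Set.indicator_of_notMem (by simp only [Set.mem_inter_iff, Set.mem_Icc]; omega),
          Set.indicator_of_mem (by exact ⟨hX, by simp only [Set.mem_Ici]; omega⟩)]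
        ring
    · rw [Set.indicator_of_notMem hX,
        Set.indicator_of_notMem (fun h => hX h.1),
        Set.indicator_of_notMem (fun h => hX h.1)]
      ring

lemma two_lt (hqpos : ∀ k, 0 < q k) (hqgrow : ∀ k, q (k + 1) > 3 * q k) (m : ℕ) :
    1 / q (m+1) < 1 / q m - 1 / q (m+1) := by
  have hm := hqpos m
  have hm1 := hqpos (m+1)
  have hg := hqgrow m
  have key : 2 / q (m+1) < 1 / q m := by
    rw [div_lt_div_iff₀ hm1 hm]; nlinarith
  have h2 : 2 / q (m+1) = 1 / q (m+1) + 1 / q (m+1) := by ring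
  linarith

lemma hK_lt (hq0 : q 0 = 1) (hqpos : ∀ k, 0 < q k) (hqgrow : ∀ k, q (k + 1) > 3 * q k)
    {X X' : Set ℕ} {n : ℕ} (hn : 1 ≤ n)
    (hagree : ∀ k < n, (k ∈ X ↔ k ∈ X')) (hmem : n ∈ X') (hnot : n ∉ X) :
    hK q X < hK q X' := by
  obtain ⟨m, rfl⟩ : ∃ m, n = m + 1 := ⟨n - 1, by omega⟩
  have hYeq : X ∩ Set.Icc 1 m = X' ∩ Set.Icc 1 m := by
    ext k
    simp only [Set.mem_inter_iff, Set.mem_Icc]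
    constructor
    · rintro ⟨h1, h2, h3⟩; exact ⟨(hagree k (by omega)).mp h1, h2, h3⟩
    · rintro ⟨h1, h2, h3⟩; exact ⟨(hagree k (by omega)).mpr h1, h2, h3⟩
  have hsplit := hK_split hq0 hqpos hqgrow X m
  have hsplit' := hK_split hq0 hqpos hqgrow X' m
  have hub : hK q (X ∩ Set.Ici (m+1)) ≤ 1 / q (m+1) := by
    rw [← hK_tail hq0 hqpos hqgrow (m+1)]
    apply hK_mono hq0 hqpos hqgrow
    rintro k ⟨hk1, hk2⟩
    simp only [Set.mem_Ici] at hk2 ⊢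
    rcases eq_or_ne k (m+1) with rfl | hne
    · exact absurd hk1 hnot
    · omega
  have hlb : (1 : ℝ) / q m - 1 / q (m+1) ≤ hK q (X' ∩ Set.Ici (m+1)) := by
    have h1 : hK q {m+1} ≤ hK q (X' ∩ Set.Ici (m+1)) := by
      apply hK_mono hq0 hqpos hqgrow
      intro k hk
      rw [Set.mem_singleton_iff] at hk
      subst hk
      exact ⟨hmem, Set.mem_Ici.mpr le_rfl⟩
    have h2 : hK q {m+1} = 1 / q m - 1 / q (m+1) := by
      rw [hK_singleton]
      simp [d]
    linarith
  have := two_lt hqpos hqgrow m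
  rw [hsplit, hsplit', hYeq]
  linarith

lemma hK_inj (hq0 : q 0 = 1) (hqpos : ∀ k, 0 < q k) (hqgrow : ∀ k, q (k + 1) > 3 * q k)
    {X X' : Set ℕ} (hX : ∀ k ∈ X, 1 ≤ k) (hX' : ∀ k ∈ X', 1 ≤ k)
    (h : hK q X = hK q X') : X = X' := by
  classical
  by_contra hne
  have hS : ∃ k, ¬(k ∈ X ↔ k ∈ X') := by
    by_contra hall
    push_neg at hall
    exact hne (Set.ext fun k => hall k)
  set n := Nat.find hS with hn
  have hnS : ¬(n ∈ X ↔ n ∈ X') := Nat.find_spec hS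
  have hn1 : 1 ≤ n := by
    rcases Nat.eq_zero_or_pos n with h0 | h1
    · exfalso
      apply hnS
      rw [h0]
      constructor
      · intro h'; exact absurd (hX 0 h') (by omega)
      · intro h'; exact absurd (hX' 0 h') (by omega)
    · exact h1
  have hagree : ∀ k < n, (k ∈ X ↔ k ∈ X') := fun k hk => not_not.mp (Nat.find_min hS hk)
  by_cases hmem : n ∈ X
  · have hnot : n ∉ X' := fun h' => hnS ⟨fun _ => h', fun _ => hmem⟩
    have := hK_lt hq0 hqpos hqgrow hn1 (fun k hk => (hagree k hk).symm) hmem hnot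
    linarith
  · have hmem' : n ∈ X' := by
      by_contra h'
      exact hnS ⟨fun h'' => absurd h'' hmem, fun h'' => absurd h'' h'⟩
    have := hK_lt hq0 hqpos hqgrow hn1 hagree hmem' hmem
    linarith

lemma flen_lt (hqpos : ∀ k, 0 < q k) (hqgrow : ∀ k, q (k + 1) > 3 * q k)
    {m m' : ℕ} (h : m < m') :
    1 / q m' - 2 / q (m'+1) < 1 / q m - 2 / q (m+1) := by
  have hm := hqpos m
  have hm1 := hqpos (m+1)
  have hm' := hqpos m'
  have hm'1 := hqpos (m'+1)
  have hA : 1 / q m' ≤ 1 / q (m+1) :=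
    one_div_le_one_div_of_le hm1 (q_mono hqpos hqgrow (by omega))
  have hB : (0:ℝ) < 2 / q (m'+1) := by positivity
  have hC : 1 / q (m+1) < 1 / (3 * q m) :=
    one_div_lt_one_div_of_lt (by linarith) (hqgrow m)
  have hD : 1 / (3 * q m) = 1 / q m / 3 := by
    field_simp
  have hE : 2 / q (m+1) = 1 / q (m+1) + 1 / q (m+1) := by ring
  linarith

lemma flen_inj (hqpos : ∀ k, 0 < q k) (hqgrow : ∀ k, q (k + 1) > 3 * q k)
    (m m' : ℕ) (h : 1 / q m - 2 / q (m+1) = 1 / q m' - 2 / q (m'+1)) : m = m' := by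
  rcases lt_trichotomy m m' with hlt | heq | hgt
  · exact absurd h (ne_of_gt (flen_lt hqpos hqgrow hlt))
  · exact heq
  · exact absurd h (ne_of_lt (flen_lt hqpos hqgrow hgt))

end Stmt12


open Stmt12

/-- Classification of complementary intervals of `K`: every complementary
interval `(x,y)` of `K` has the form
`(h(Y) + 1/q(m+1), h(Y) + 1/q m - 1/q(m+1))` for a unique `m` and a unique
`Y ⊆ {1,…,m}`; its length is `1/q m - 2/q(m+1)`, and this length determines
`m` uniquely. -/

theorem stmt_12 (q : ℕ → ℝ) (hq0 : q 0 = 1) (hqpos : ∀ k, 0 < q k)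
    (hqgrow : ∀ k, q (k + 1) > 3 * q k)
    (x y : ℝ) (hx : x ∈ Kset q) (hy : y ∈ Kset q) (hxy : x < y)
    (hgap : Set.Ioo x y ∩ Kset q = ∅) :
    (∃! p : ℕ × Set ℕ, p.2 ⊆ Set.Icc 1 p.1 ∧
        x = hK q p.2 + 1 / q (p.1 + 1) ∧
        y = hK q p.2 + 1 / q p.1 - 1 / q (p.1 + 1)) ∧
    (∃ m : ℕ, y - x = 1 / q m - 2 / q (m + 1)) ∧
    (∀ m m' : ℕ, 1 / q m - 2 / q (m + 1) = 1 / q m' - 2 / q (m' + 1) → m = m') := by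
  classical
  obtain ⟨X, hX1, hXx⟩ := hx
  obtain ⟨X', hX'1, hX'y⟩ := hy
  have hne : X ≠ X' := by
    intro h
    subst h
    rw [hXx] at hX'y
    linarith
  have hS : ∃ k, ¬(k ∈ X ↔ k ∈ X') := by
    by_contra hall
    push_neg at hall
    exact hne (Set.ext fun k => hall k)
  set n := Nat.find hS with hndef
  have hnS : ¬(n ∈ X ↔ n ∈ X') := Nat.find_spec hS
  have hn1 : 1 ≤ n := by
    by_contra h0
    apply hnS
    have : n = 0 := by omega
    rw [this]
    constructor
    · intro h'; exact absurd (hX1 0 h') (by omega)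
    · intro h'; exact absurd (hX'1 0 h') (by omega)
  have hagree : ∀ k < n, (k ∈ X ↔ k ∈ X') := fun k hk => not_not.mp (Nat.find_min hS hk)
  have hmem' : n ∈ X' := by
    by_contra h'
    by_cases h : n ∈ X
    · have := hK_lt hq0 hqpos hqgrow hn1 (fun k hk => (hagree k hk).symm) h h'
      rw [hXx, hX'y] at this
      linarith
    · exact hnS ⟨fun h'' => absurd h'' h, fun h'' => absurd h'' h'⟩
  have hnot : n ∉ X := fun h => hnS ⟨fun _ => hmem', fun _ => h⟩
  obtain ⟨m, hm⟩ : ∃ m, n = m + 1 := ⟨n - 1, by omega⟩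
  rw [hm] at hmem' hnot hagree
  set Y : Set ℕ := X ∩ Set.Icc 1 m with hYdef
  have hYsub : Y ⊆ Set.Icc 1 m := Set.inter_subset_right
  have hY1 : ∀ k ∈ Y, 1 ≤ k := fun k hk => (Set.mem_Icc.mp (hYsub hk)).1
  have hYeq : X' ∩ Set.Icc 1 m = Y := by
    ext k
    simp only [hYdef, Set.mem_inter_iff, Set.mem_Icc]
    constructor
    · rintro ⟨h1, h2, h3⟩; exact ⟨(hagree k (by omega)).mpr h1, h2, h3⟩
    · rintro ⟨h1, h2, h3⟩; exact ⟨(hagree k (by omega)).mp h1, h2, h3⟩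
  have hxs : x = hK q Y + hK q (X ∩ Set.Ici (m+1)) := by
    rw [← hXx]; exact hK_split hq0 hqpos hqgrow X m
  have hys : y = hK q Y + hK q (X' ∩ Set.Ici (m+1)) := by
    rw [← hX'y, ← hYeq]; exact hK_split hq0 hqpos hqgrow X' m
  have htail : hK q (Set.Ici (m+1+1)) = 1 / q (m+1) := hK_tail hq0 hqpos hqgrow (m+1)
  have hsing : hK q {m+1} = 1 / q m - 1 / q (m+1) := by
    rw [hK_singleton]; simp [d]
  -- the two endpoints of the candidate gap
  have ha_mem : hK q Y + 1 / q (m+1) ∈ Kset q := by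
    refine ⟨Y ∪ Set.Ici (m+2), ?_, ?_⟩
    · rintro k (hk | hk)
      · exact hY1 k hk
      · have := Set.mem_Ici.mp hk; omega
    · have hdisj : Disjoint Y (Set.Ici (m+2)) := by
        rw [Set.disjoint_left]
        intro k hk hk'
        have h1 := (Set.mem_Icc.mp (hYsub hk)).2
        have h2 := Set.mem_Ici.mp hk'
        omega
      rw [hK_union hq0 hqpos hqgrow hdisj]
      rw [show m + 2 = m + 1 + 1 from rfl, htail]
  have hb_mem : hK q Y + (1 / q m - 1 / q (m+1)) ∈ Kset q := by
    refine ⟨Y ∪ {m+1}, ?_, ?_⟩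
    · rintro k (hk | hk)
      · exact hY1 k hk
      · rw [Set.mem_singleton_iff] at hk; omega
    · have hdisj : Disjoint Y ({m+1} : Set ℕ) := by
        rw [Set.disjoint_left]
        intro k hk hk'
        rw [Set.mem_singleton_iff] at hk'
        have h1 := (Set.mem_Icc.mp (hYsub hk)).2
        omega
      rw [hK_union hq0 hqpos hqgrow hdisj, hsing]
  have hxa : x ≤ hK q Y + 1 / q (m+1) := by
    rw [hxs]
    apply add_le_add_right
    rw [← htail]
    apply hK_mono hq0 hqpos hqgrow
    rintro k ⟨hk1, hk2⟩
    have h2 := Set.mem_Ici.mp hk2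
    simp only [Set.mem_Ici]
    rcases eq_or_ne k (m+1) with rfl | hne'
    · exact absurd hk1 hnot
    · omega
  have hby : hK q Y + (1 / q m - 1 / q (m+1)) ≤ y := by
    rw [hys]
    apply add_le_add_right
    rw [← hsing]
    apply hK_mono hq0 hqpos hqgrow
    intro k hk
    rw [Set.mem_singleton_iff] at hk
    subst hk
    exact ⟨hmem', Set.mem_Ici.mpr le_rfl⟩
  have hab : hK q Y + 1 / q (m+1) < hK q Y + (1 / q m - 1 / q (m+1)) :=
    add_lt_add_right (two_lt hqpos hqgrow m) _
  have ha : hK q Y + 1 / q (m+1) = x := by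
    by_contra h
    have h1 : x < hK q Y + 1 / q (m+1) := lt_of_le_of_ne hxa (Ne.symm h)
    have h2 : hK q Y + 1 / q (m+1) < y := lt_of_lt_of_le hab hby
    exact Set.eq_empty_iff_forall_notMem.mp hgap _ ⟨⟨h1, h2⟩, ha_mem⟩
  have hb : hK q Y + (1 / q m - 1 / q (m+1)) = y := by
    by_contra h
    have h1 : hK q Y + (1 / q m - 1 / q (m+1)) < y := lt_of_le_of_ne hby h
    have h2 : x < hK q Y + (1 / q m - 1 / q (m+1)) := by linarith
    exact Set.eq_empty_iff_forall_notMem.mp hgap _ ⟨⟨h2, h1⟩, hb_mem⟩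
  have hlen : y - x = 1 / q m - 2 / q (m+1) := by
    have h2 : 2 / q (m+1) = 1 / q (m+1) + 1 / q (m+1) := by ring
    linarith
  refine ⟨⟨(m, Y), ⟨hYsub, ha.symm, by dsimp only; linarith⟩, ?_⟩, ⟨m, hlen⟩,
    fun a b hab' => flen_inj hqpos hqgrow a b hab'⟩
  rintro ⟨m', Y'⟩ ⟨hsub', hx', hy'⟩
  dsimp only at hsub' hx' hy'
  have hlen' : y - x = 1 / q m' - 2 / q (m'+1) := by
    have h2 : 2 / q (m'+1) = 1 / q (m'+1) + 1 / q (m'+1) := by ring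
    linarith
  have hmm : m' = m := flen_inj hqpos hqgrow m' m (by linarith)
  subst hmm
  have hhk : hK q Y' = hK q Y := by linarith
  have hYY : Y' = Y :=
    hK_inj hq0 hqpos hqgrow (fun k hk => (Set.mem_Icc.mp (hsub' hk)).1) hY1 hhk
  rw [hYY]
end

section
/- Vanishing of rational linear combinations is digitwise (the concrete form of Axiom T11(i), verified in the Proposition that (ℝ, K, Q, ε) ⊨ 𝕋): for every n ≥ 1, every p = (p_1,…,p_n) ∈ ℚ^n, and all X_1,…,X_n ⊆ {1,2,3,…}, one has ∑_{i=1}^n p_i · h(X_i) = 0 if and only if for every m ≥ 1, ∑_{i : m ∈ X_i} p_i = 0. -/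
namespace Stmt15Aux

/-- The digit weights `a m = 1/q (m-1) - 1/q m`. -/
noncomputable def aK (q : ℕ → ℝ) (m : ℕ) : ℝ := 1 / q (m - 1) - 1 / q m

lemma q_mono (q : ℕ → ℝ) (hqpos : ∀ k, 0 < q k) (hqgrow : ∀ k, q (k + 1) > 3 * q k) :
    Monotone q :=
  monotone_nat_of_le_succ fun k =>
    le_of_lt (lt_of_le_of_lt (by nlinarith [hqpos k]) (hqgrow k))

lemma pow_le_q (q : ℕ → ℝ) (hq0 : q 0 = 1) (hqpos : ∀ k, 0 < q k)
    (hqgrow : ∀ k, q (k + 1) > 3 * q k) : ∀ k, (3 : ℝ) ^ k ≤ q k := by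
  intro k
  induction k with
  | zero => simp [hq0]
  | succ k ih =>
    have := hqgrow k
    calc (3:ℝ)^(k+1) = 3 * 3^k := by ring
    _ ≤ 3 * q k := by nlinarith
    _ ≤ q (k+1) := le_of_lt (hqgrow k)

lemma aK_nonneg (q : ℕ → ℝ) (hqpos : ∀ k, 0 < q k) (hqgrow : ∀ k, q (k + 1) > 3 * q k)
    (m : ℕ) : 0 ≤ aK q m := by
  have h1 : q (m - 1) ≤ q m := q_mono q hqpos hqgrow (Nat.sub_le m 1)
  have h2 : 0 < q (m - 1) := hqpos _
  have := one_div_le_one_div_of_le h2 h1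
  simpa [aK, sub_nonneg] using this

lemma summable_aK (q : ℕ → ℝ) (hq0 : q 0 = 1) (hqpos : ∀ k, 0 < q k)
    (hqgrow : ∀ k, q (k + 1) > 3 * q k) : Summable (aK q) := by
  have hg : Summable (fun m : ℕ => 3 * (1/3 : ℝ) ^ m) :=
    (summable_geometric_of_lt_one (by norm_num) (by norm_num)).mul_left 3
  refine Summable.of_nonneg_of_le (aK_nonneg q hqpos hqgrow) (fun m => ?_) hg
  have h1 : aK q m ≤ 1 / q (m - 1) := by
    have := one_div_pos.mpr (hqpos m)
    simp only [aK]; linarith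
  have h2 : (3:ℝ) ^ (m-1) ≤ q (m-1) := pow_le_q q hq0 hqpos hqgrow _
  have h3 : (0:ℝ) < 3 ^ (m-1) := by positivity
  have h4 : 1 / q (m-1) ≤ 1 / (3:ℝ)^(m-1) := one_div_le_one_div_of_le h3 h2
  have h5 : 1 / (3:ℝ)^(m-1) ≤ 3 * (1/3)^m := by
    rcases m with _ | k
    · norm_num
    · simp only [Nat.add_sub_cancel]
      rw [one_div, ← inv_pow]
      rw [pow_succ]
      have : ((3:ℝ)⁻¹)^k = ((1:ℝ)/3)^k := by norm_num
      rw [this]; ring_nf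
      norm_num
  linarith

lemma tsum_tail_aK (q : ℕ → ℝ) (hq0 : q 0 = 1) (hqpos : ∀ k, 0 < q k)
    (hqgrow : ∀ k, q (k + 1) > 3 * q k) (k : ℕ) :
    ∑' m : ℕ, aK q (m + (k + 2)) ≤ 1 / q (k + 1) := by
  apply Real.tsum_le_of_sum_range_le (fun m => aK_nonneg q hqpos hqgrow _)
  intro M
  have hterm : ∀ m : ℕ, aK q (m + (k + 2)) = 1 / q (m + (k+1)) - 1 / q ((m+1) + (k+1)) := by
    intro m
    unfold aK
    rw [show m + (k+2) - 1 = m + (k+1) from by omega, show m + (k+2) = (m+1) + (k+1) from by omega]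
  calc ∑ m ∈ Finset.range M, aK q (m + (k + 2))
      = ∑ m ∈ Finset.range M, ((fun j => 1 / q (j + (k+1))) m - (fun j => 1 / q (j + (k+1))) (m+1)) := by
        exact Finset.sum_congr rfl fun m _ => hterm m
    _ = 1 / q (0 + (k+1)) - 1 / q (M + (k+1)) := Finset.sum_range_sub' _ _
    _ ≤ 1 / q (k+1) := by
        have := one_div_pos.mpr (hqpos (M + (k+1)))
        simp only [Nat.zero_add]
        linarith

lemma sum_repr (q : ℕ → ℝ) (hq0 : q 0 = 1) (hqpos : ∀ k, 0 < q k)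
    (hqgrow : ∀ k, q (k + 1) > 3 * q k)
    (n : ℕ) (p : Fin n → ℚ) (X : Fin n → Set ℕ) :
    (∑ i, (p i : ℝ) * hK q (X i)) =
      ∑' m : ℕ, ((∑ i, (X i).indicator (fun _ => p i) m : ℚ) : ℝ) * aK q m := by
  classical
  have hsa := summable_aK q hq0 hqpos hqgrow
  have hsi : ∀ i : Fin n, Summable ((X i).indicator (aK q)) := fun i => hsa.indicator _
  have step1 : ∀ i : Fin n, (p i : ℝ) * hK q (X i) = ∑' m, (p i : ℝ) * (X i).indicator (aK q) m := by
    intro i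
    show (p i : ℝ) * ∑' m, (X i).indicator (aK q) m = _
    exact tsum_mul_left.symm
  rw [Finset.sum_congr rfl fun i _ => step1 i]
  rw [← Summable.tsum_finsetSum (fun i _ => ((hsi i).mul_left _))]
  apply tsum_congr
  intro m
  push_cast
  rw [Finset.sum_mul]
  refine Finset.sum_congr rfl fun i _ => ?_
  by_cases h : m ∈ X i <;> simp [h]

/-- Key lemma: if the coefficients are small and some digit sum is nonzero,
the linear combination is nonzero. -/
lemma main_small (q : ℕ → ℝ) (hq0 : q 0 = 1) (hqpos : ∀ k, 0 < q k)
    (hqgrow : ∀ k, q (k + 1) > 3 * q k)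
    (hB : ∃ P : ℕ → Finset ℚ, Monotone P ∧ (∀ r : ℚ, ∃ k, r ∈ P k) ∧
      ∀ k : ℕ, ∀ p : ℕ → ℚ, (∀ i ≤ k, p i ∈ P k) → (∃ i ≤ k, p i ≠ 0) →
        |∑ i ∈ Finset.range (k + 1), (p i : ℝ) / q i| > 1 / q (k + 1))
    (n : ℕ) (p : Fin n → ℚ) (X : Fin n → Set ℕ)
    (hX : ∀ i, ∀ m ∈ X i, 1 ≤ m) (hsmall : (∑ i, |p i|) < 1/2)
    (m0 : ℕ) (hm0 : 1 ≤ m0) (hcm0 : (∑ i, (X i).indicator (fun _ => p i) m0) ≠ 0) :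
    (∑ i, (p i : ℝ) * hK q (X i)) ≠ 0 := by
  classical
  intro hS
  obtain ⟨P, hPmono, hPcov, hPbound⟩ := hB
  set c : ℕ → ℚ := fun m => ∑ i, (X i).indicator (fun _ => p i) m with hc
  set C : ℚ := ∑ i, |p i| with hCdef
  -- basic facts about c
  have hc0 : c 0 = 0 := by
    apply Finset.sum_eq_zero
    intro i _
    exact Set.indicator_of_notMem (fun h0 => absurd (hX i 0 h0) (by norm_num)) _
  have habs : ∀ m, |c m| ≤ C := by
    intro m
    refine le_trans (Finset.abs_sum_le_sum_abs _ _) (Finset.sum_le_sum fun i _ => ?_)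
    by_cases h : m ∈ X i <;> simp [h, abs_nonneg]
  have habsR : ∀ m, |(c m : ℝ)| ≤ (C : ℝ) := by
    intro m; exact_mod_cast habs m
  have hCR : (C : ℝ) < 1/2 := by
    have : ((C : ℚ) : ℝ) < ((1/2 : ℚ) : ℝ) := by exact_mod_cast hsmall
    simpa using this
  have hC0 : (0:ℚ) ≤ C := Finset.sum_nonneg fun i _ => abs_nonneg _
  -- rewrite the sum
  rw [sum_repr q hq0 hqpos hqgrow n p X] at hS
  have hsa := summable_aK q hq0 hqpos hqgrow
  have hanneg := aK_nonneg q hqpos hqgrow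
  have hsca : Summable (fun m => ((c m : ℚ) : ℝ) * aK q m) := by
    refine Summable.of_norm_bounded (g := fun m => (C : ℝ) * aK q m) (hsa.mul_left _) fun m => ?_
    rw [norm_mul, Real.norm_eq_abs, Real.norm_eq_abs, abs_of_nonneg (hanneg m)]
    exact mul_le_mul_of_nonneg_right (habsR m) (hanneg m)
  -- the finite set of possible digit differences
  set V : Finset ℚ := (Finset.univ : Finset (Finset (Fin n))).image (fun T => ∑ i ∈ T, p i) with hV
  have hcV : ∀ m, c m ∈ V := by
    intro m
    rw [hV, Finset.mem_image]
    refine ⟨Finset.univ.filter (fun i => m ∈ X i), Finset.mem_univ _, ?_⟩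
    rw [Finset.sum_filter]
    exact Finset.sum_congr rfl fun i _ => by by_cases h : m ∈ X i <;> simp [h]
  set D : Finset ℚ := (V ×ˢ V).image (fun r => r.1 - r.2) with hD
  have hdD : ∀ j, c (j+1) - c j ∈ D := by
    intro j
    rw [hD, Finset.mem_image]
    exact ⟨(c (j+1), c j), Finset.mem_product.mpr ⟨hcV _, hcV _⟩, rfl⟩
  set k0 : ℕ := D.sup (fun r => Nat.find (hPcov r)) with hk0def
  have hk0 : ∀ r ∈ D, r ∈ P k0 := fun r hr =>
    hPmono (Finset.le_sup hr) (Nat.find_spec (hPcov r))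
  -- the first nonzero digit difference
  have hj0 : ∃ j < m0, c (j+1) - c j ≠ 0 := by
    by_contra h
    push_neg at h
    apply hcm0
    have : c m0 = 0 := by
      have h1 : ∑ j ∈ Finset.range m0, (c (j+1) - c j) = c m0 - c 0 := Finset.sum_range_sub c m0
      rw [Finset.sum_eq_zero (fun j hj => h j (Finset.mem_range.mp hj))] at h1
      rw [hc0] at h1
      linarith [h1.symm]
    exact this
  obtain ⟨j0, hj0lt, hj0ne⟩ := hj0
  set k : ℕ := max k0 m0 with hkdef
  -- apply condition (B)
  have hbig : |∑ i ∈ Finset.range (k + 1), ((c (i+1) - c i : ℚ) : ℝ) / q i| > 1 / q (k + 1) := by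
    apply hPbound k (fun j => c (j+1) - c j)
    · intro i _
      exact hPmono (le_max_left k0 m0) (hk0 _ (hdD i))
    · exact ⟨j0, le_trans (Nat.le_of_lt_succ (Nat.lt_succ_of_lt hj0lt)) (le_max_right k0 m0), hj0ne⟩
  -- the finite telescoping identity
  have hfin : ∀ K : ℕ, ∑ m ∈ Finset.range (K+2), ((c m : ℚ) : ℝ) * aK q m
      = (∑ j ∈ Finset.range (K+1), ((c (j+1) - c j : ℚ) : ℝ) / q j) - (c (K+1) : ℝ) / q (K+1) := by
    intro K
    induction K with
    | zero =>
      rw [Finset.sum_range_succ, Finset.sum_range_succ, Finset.sum_range_zero,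
        Finset.sum_range_one]
      have ha0 : aK q 0 = 0 := by simp [aK]
      have ha1 : aK q 1 = 1 / q 0 - 1 / q 1 := by simp [aK]
      rw [ha0, ha1, hc0]
      push_cast
      ring
    | succ K ih =>
      have ha : aK q (K + 2) = 1 / q (K+1) - 1 / q (K+2) := by
        unfold aK
        rw [show K + 2 - 1 = K + 1 from rfl]
      have hL : ∑ m ∈ Finset.range (K+1+2), ((c m : ℚ) : ℝ) * aK q m
          = (∑ m ∈ Finset.range (K+2), ((c m : ℚ) : ℝ) * aK q m)
            + ((c (K+2) : ℚ) : ℝ) * aK q (K+2) :=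
        Finset.sum_range_succ _ _
      have hR : ∑ j ∈ Finset.range (K+1+1), ((c (j+1) - c j : ℚ) : ℝ) / q j
          = (∑ j ∈ Finset.range (K+1), ((c (j+1) - c j : ℚ) : ℝ) / q j)
            + ((c (K+2) - c (K+1) : ℚ) : ℝ) / q (K+1) :=
        Finset.sum_range_succ _ _
      rw [hL, ih, hR, ha, show K + 1 + 1 = K + 2 from rfl]
      push_cast
      ring
  -- split the infinite sum
  have hsplit := Summable.sum_add_tsum_nat_add (f := fun m => ((c m : ℚ) : ℝ) * aK q m) (k+2) hsca
  rw [hS] at hsplit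
  -- tail bound
  have htails : Summable (fun m => ((c (m + (k+2)) : ℚ) : ℝ) * aK q (m + (k+2))) := by
    have := hsca
    rwa [← summable_nat_add_iff (k+2)] at this
  have htail : |∑' m : ℕ, ((c (m + (k+2)) : ℚ) : ℝ) * aK q (m + (k+2))| ≤ (C : ℝ) * (1 / q (k+1)) := by
    have h1 : |∑' m : ℕ, ((c (m + (k+2)) : ℚ) : ℝ) * aK q (m + (k+2))|
        ≤ ∑' m : ℕ, ‖((c (m + (k+2)) : ℚ) : ℝ) * aK q (m + (k+2))‖ := by
      rw [← Real.norm_eq_abs]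
      exact norm_tsum_le_tsum_norm htails.norm
    have h2 : ∑' m : ℕ, ‖((c (m + (k+2)) : ℚ) : ℝ) * aK q (m + (k+2))‖
        ≤ ∑' m : ℕ, (C : ℝ) * aK q (m + (k+2)) := by
      apply Summable.tsum_le_tsum _ htails.norm
      · exact Summable.mul_left _ ((summable_nat_add_iff (k+2)).mpr hsa)
      · intro m
        rw [norm_mul, Real.norm_eq_abs, Real.norm_eq_abs, abs_of_nonneg (hanneg _)]
        exact mul_le_mul_of_nonneg_right (habsR _) (hanneg _)
    have h3 : ∑' m : ℕ, (C : ℝ) * aK q (m + (k+2)) = (C : ℝ) * ∑' m : ℕ, aK q (m + (k+2)) :=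
      tsum_mul_left
    have h4 : (C : ℝ) * ∑' m : ℕ, aK q (m + (k+2)) ≤ (C : ℝ) * (1 / q (k+1)) := by
      apply mul_le_mul_of_nonneg_left (tsum_tail_aK q hq0 hqpos hqgrow k)
      exact_mod_cast hC0
    linarith
  -- conclude
  set PP : ℝ := ∑ j ∈ Finset.range (k+1), ((c (j+1) - c j : ℚ) : ℝ) / q j with hPP
  set T : ℝ := ∑' m : ℕ, ((c (m + (k+2)) : ℚ) : ℝ) * aK q (m + (k+2)) with hT
  have heq : PP - (c (k+1) : ℝ) / q (k+1) + T = 0 := by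
    rw [hPP, ← hfin k]
    exact hsplit
  have hQ : (0:ℝ) < q (k+1) := hqpos _
  have hcb : |(c (k+1) : ℝ) / q (k+1)| ≤ (C : ℝ) / q (k+1) := by
    rw [abs_div, abs_of_pos hQ]
    exact div_le_div_of_nonneg_right (habsR _) (le_of_lt hQ)
  have hPPb : |PP| ≤ (C : ℝ) / q (k+1) + (C : ℝ) * (1 / q (k+1)) := by
    have : PP = (c (k+1) : ℝ) / q (k+1) - T := by linarith
    rw [this]
    calc |(c (k+1) : ℝ) / q (k+1) - T| ≤ |(c (k+1) : ℝ) / q (k+1)| + |T| := abs_sub _ _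
      _ ≤ (C : ℝ) / q (k+1) + (C : ℝ) * (1 / q (k+1)) := add_le_add hcb htail
  have h1Q : (0:ℝ) < 1 / q (k+1) := one_div_pos.mpr hQ
  have : 1 / q (k+1) < |PP| := hbig
  have hCq : (C : ℝ) / q (k+1) = (C : ℝ) * (1 / q (k+1)) := by ring
  nlinarith [hPPb, this, h1Q, hCR]

end Stmt15Aux

open Stmt15Aux in
/-- Vanishing of rational linear combinations is digitwise:
`∑ i, p i * h(X i) = 0` iff for every `m ≥ 1` the sum of the `p i` over those
`i` with `m ∈ X i` vanishes. -/
theorem stmt_15 (q : ℕ → ℝ) (hq0 : q 0 = 1) (hqpos : ∀ k, 0 < q k)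
    (hqgrow : ∀ k, q (k + 1) > 3 * q k)
    (halg : AlgebraicIndependent ℚ (fun k : ℕ => q (k + 1)))
    (hB : ∃ P : ℕ → Finset ℚ, Monotone P ∧ (∀ r : ℚ, ∃ k, r ∈ P k) ∧
      ∀ k : ℕ, ∀ p : ℕ → ℚ, (∀ i ≤ k, p i ∈ P k) → (∃ i ≤ k, p i ≠ 0) →
        |∑ i ∈ Finset.range (k + 1), (p i : ℝ) / q i| > 1 / q (k + 1))
    (n : ℕ) (hn : 1 ≤ n) (p : Fin n → ℚ) (X : Fin n → Set ℕ)
    (hX : ∀ i, ∀ m ∈ X i, 1 ≤ m) :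
    (∑ i, (p i : ℝ) * hK q (X i)) = 0 ↔
      ∀ m : ℕ, 1 ≤ m → (∑ i, (X i).indicator (fun _ => p i) m) = 0 := by
  classical
  constructor
  · intro hS m hm
    by_contra hcm
    set C : ℚ := ∑ i, |p i| with hCdef
    have hC0 : 0 ≤ C := Finset.sum_nonneg fun i _ => abs_nonneg _
    set lam : ℚ := (2 * C + 1)⁻¹ with hlam
    have hlampos : 0 < lam := inv_pos.mpr (by linarith)
    have hsmall : (∑ i, |lam * p i|) < 1/2 := by
      have h1 : ∑ i, |lam * p i| = lam * C := by
        rw [hCdef, Finset.mul_sum]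
        exact Finset.sum_congr rfl fun i _ => by
          rw [abs_mul, abs_of_pos hlampos]
      rw [h1, hlam, inv_mul_eq_div, div_lt_iff₀ (by linarith)]
      linarith
    have hc' : (∑ i, (X i).indicator (fun _ => lam * p i) m) ≠ 0 := by
      have h2 : (∑ i, (X i).indicator (fun _ => lam * p i) m)
          = lam * ∑ i, (X i).indicator (fun _ => p i) m := by
        rw [Finset.mul_sum]
        exact Finset.sum_congr rfl fun i _ => by
          by_cases h : m ∈ X i <;> simp [h]
      rw [h2]
      exact mul_ne_zero (ne_of_gt hlampos) hcm
    have hne := main_small q hq0 hqpos hqgrow hB n (fun i => lam * p i) X hX hsmall m hm hc'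
    apply hne
    have h3 : ∑ i, ((lam * p i : ℚ) : ℝ) * hK q (X i)
        = (lam : ℝ) * ∑ i, (p i : ℝ) * hK q (X i) := by
      rw [Finset.mul_sum]
      refine Finset.sum_congr rfl fun i _ => ?_
      push_cast
      ring
    rw [h3, hS, mul_zero]
  · intro h
    rw [sum_repr q hq0 hqpos hqgrow n p X]
    have hz : ∀ m : ℕ, ((∑ i, (X i).indicator (fun _ => p i) m : ℚ) : ℝ) * aK q m = 0 := by
      intro m
      rcases Nat.eq_zero_or_pos m with h0 | h1
      · subst h0
        have : aK q 0 = 0 := by simp [aK]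
        rw [this, mul_zero]
      · rw [h m h1]
        simp
    rw [tsum_congr hz, tsum_zero]
end

section
/- Rational linear relations pass to truncations (the concrete form of Lemma 4.9): if Y, X_1,…,X_n ⊆ {1,2,3,…} and p = (p_1,…,p_n) ∈ ℚ^n satisfy h(Y) = ∑_{i=1}^n p_i · h(X_i), then for every m ∈ ℕ one has h(Y ∩ {1,…,m}) = ∑_{i=1}^n p_i · h(X_i ∩ {1,…,m}). -/
open Pointwise


/-- Rational linear relations pass to truncations: if
`h(Y) = ∑ i, p i * h(X i)`, then for every `m`,
`h(Y ∩ {1,…,m}) = ∑ i, p i * h(X i ∩ {1,…,m})`. -/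
theorem stmt_17 (q : ℕ → ℝ) (hq0 : q 0 = 1) (hqpos : ∀ k, 0 < q k)
    (hqgrow : ∀ k, q (k + 1) > 3 * q k)
    (halg : AlgebraicIndependent ℚ (fun k : ℕ => q (k + 1)))
    (hB : ∃ P : ℕ → Finset ℚ, Monotone P ∧ (∀ r : ℚ, ∃ k, r ∈ P k) ∧
      ∀ k : ℕ, ∀ p : ℕ → ℚ, (∀ i ≤ k, p i ∈ P k) → (∃ i ≤ k, p i ≠ 0) →
        |∑ i ∈ Finset.range (k + 1), (p i : ℝ) / q i| > 1 / q (k + 1))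
    (n : ℕ) (p : Fin n → ℚ) (Y : Set ℕ) (X : Fin n → Set ℕ)
    (hY : ∀ m ∈ Y, 1 ≤ m) (hX : ∀ i, ∀ m ∈ X i, 1 ≤ m)
    (hrel : hK q Y = ∑ i, (p i : ℝ) * hK q (X i)) (m : ℕ) :
    hK q (Y ∩ Set.Icc 1 m) = ∑ i, (p i : ℝ) * hK q (X i ∩ Set.Icc 1 m) := by
  classical
  obtain ⟨P, hPmono, hPex, hPbound⟩ := hB
  set f : ℕ → ℝ := fun k => 1 / q (k - 1) - 1 / q k with hfdef
  have hKeq : ∀ Z : Set ℕ, hK q Z = ∑' k, Z.indicator f k := fun Z => rfl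
  have hqlt : ∀ k, q k < q (k + 1) := fun k => by nlinarith [hqpos k, hqgrow k]
  have hq3 : ∀ k, (3:ℝ) ^ k ≤ q k := by
    intro k
    induction k with
    | zero => simp [hq0]
    | succ k ih =>
      have h := hqgrow k
      calc (3:ℝ) ^ (k+1) = 3 * 3 ^ k := by ring
        _ ≤ 3 * q k := by nlinarith
        _ ≤ q (k+1) := le_of_lt h
  have hqinv : ∀ k, 1 / q k ≤ (1/3:ℝ) ^ k := by
    intro k
    have h1 : (0:ℝ) < 3 ^ k := by positivity
    have := one_div_le_one_div_of_le h1 (hq3 k)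
    calc 1 / q k ≤ 1 / (3:ℝ)^k := this
      _ = (1/3:ℝ)^k := by rw [div_pow, one_pow]
  have hfnonneg : ∀ k, 0 ≤ f k := by
    intro k
    rcases k with _ | k
    · simp [hfdef]
    · have h1 := one_div_le_one_div_of_le (hqpos k) (le_of_lt (hqlt k))
      simp only [hfdef, Nat.add_sub_cancel]
      linarith
  have hfle : ∀ k, f k ≤ 3 * (1/3:ℝ) ^ k := by
    intro k
    rcases k with _ | k
    · simp only [hfdef]
      norm_num
    · have h1 : 1 / q k ≤ (1/3:ℝ)^k := hqinv k
      have h3 : (0:ℝ) ≤ 1 / q (k+1) := div_nonneg zero_le_one (hqpos _).le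
      have h4 : (1/3:ℝ)^k = 3 * (1/3:ℝ)^(k+1) := by ring
      simp only [hfdef, Nat.add_sub_cancel]
      linarith
  have hsumgeo : Summable (fun k : ℕ => 3 * (1/3:ℝ) ^ k) :=
    (summable_geometric_of_lt_one (by norm_num) (by norm_num)).mul_left 3
  have hsumf : Summable f := Summable.of_nonneg_of_le hfnonneg hfle hsumgeo
  have hsumI : ∀ Z : Set ℕ, Summable (Z.indicator f) := fun Z => hsumf.indicator Z
  set c : ℕ → ℚ :=
    fun k => (if k ∈ Y then 1 else 0) - ∑ i, p i * (if k ∈ X i then 1 else 0) with hcdef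
  set d : ℕ → ℝ :=
    fun k => Y.indicator f k - ∑ i, (p i : ℝ) * (X i).indicator f k with hddef
  have hcR : ∀ k, ((c k : ℝ))
      = (if k ∈ Y then (1:ℝ) else 0) - ∑ i, (p i : ℝ) * (if k ∈ X i then (1:ℝ) else 0) := by
    intro k
    simp only [hcdef]
    push_cast
    congr 1
    · split_ifs <;> simp
    · exact Finset.sum_congr rfl fun i _ => by split_ifs <;> simp
  have hdc : ∀ k, d k = (c k : ℝ) * f k := by
    intro k
    simp only [hddef]
    rw [hcR k, sub_mul, Finset.sum_mul]
    simp only [Set.indicator_apply]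
    congr 1
    · split_ifs <;> ring
    · exact Finset.sum_congr rfl fun i _ => by split_ifs <;> ring
  have hsum2 : Summable (fun k => ∑ i, (p i : ℝ) * (X i).indicator f k) :=
    summable_sum fun i _ => ((hsumI (X i)).mul_left _)
  have hsumd : Summable d := by
    simp only [hddef]; exact (hsumI Y).sub hsum2
  have htsum0 : ∑' k, d k = 0 := by
    simp only [hddef]
    rw [Summable.tsum_sub (hsumI Y) hsum2, Summable.tsum_finsetSum (fun i _ => ((hsumI (X i)).mul_left _))]
    have h1 : ∀ i : Fin n, ∑' k, (p i : ℝ) * (X i).indicator f k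
        = (p i : ℝ) * hK q (X i) := fun i => by rw [tsum_mul_left, hKeq]
    rw [Finset.sum_congr rfl fun i _ => h1 i, ← hKeq, ← hrel, sub_self]
  have h0Y : (0:ℕ) ∉ Y := fun h => by simpa using hY 0 h
  have h0X : ∀ i, (0:ℕ) ∉ X i := fun i h => by simpa using hX i 0 h
  have hc0 : c 0 = 0 := by simp [hcdef, h0Y, h0X]
  set e : ℕ → ℚ := fun i => c (i + 1) - c i with hedef
  have hSid : ∀ k : ℕ, ∑ i ∈ Finset.range (k+1), (e i : ℝ) / q i
      = (∑ j ∈ Finset.range (k+2), d j) + (c (k+1) : ℝ) / q (k+1) := by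
    intro k
    induction k with
    | zero =>
      have hq1 : q 1 ≠ 0 := ne_of_gt (hqpos 1)
      simp only [Finset.sum_range_succ, Finset.sum_range_zero, hdc, hedef]
      push_cast [hc0]
      simp only [hfdef]
      norm_num [hq0]
      field_simp
      ring
    | succ k ih =>
      have hsplit : ∑ j ∈ Finset.range (k+1+2), d j
          = ∑ j ∈ Finset.range (k+2), d j + d (k+2) := Finset.sum_range_succ _ _
      rw [Finset.sum_range_succ, ih, hsplit]
      have h1 : q (k+1) ≠ 0 := ne_of_gt (hqpos _)
      have h2 : q (k+2) ≠ 0 := ne_of_gt (hqpos _)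
      have hf2 : f (k+2) = 1 / q (k+1) - 1 / q (k+2) := by
        simp only [hfdef]
        rw [show k+2-1 = k+1 from rfl]
      have he2 : ((e (k+1) : ℝ)) = (c (k+2) : ℝ) - (c (k+1) : ℝ) := by
        simp only [hedef]; push_cast; ring
      have key : (c (k+1) : ℝ) / q (k+1) + (e (k+1) : ℝ) / q (k+1)
          = d (k+2) + (c (k+2) : ℝ) / q (k+2) := by
        rw [hdc, hf2, he2]
        field_simp
        ring
      linarith [key]
  have htel : ∀ k j : ℕ, ∑ i ∈ Finset.range j, f (i + (k+2))
      = 1 / q (k+1) - 1 / q (k+1+j) := by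
    intro k j
    induction j with
    | zero => simp
    | succ j ih =>
      rw [Finset.sum_range_succ, ih, show j + (k+2) = (k+1+j)+1 by omega]
      simp only [hfdef, Nat.add_sub_cancel]
      have : k+1+(j+1) = (k+1+j)+1 := by omega
      rw [this]
      ring
  have htailf : ∀ k : ℕ, ∑' i, f (i + (k+2)) ≤ 1 / q (k+1) := by
    intro k
    apply Summable.tsum_le_of_sum_range_le ((summable_nat_add_iff _).2 hsumf)
    intro j
    rw [htel k j]
    have h1 : (0:ℝ) ≤ 1 / q (k+1+j) := div_nonneg zero_le_one (hqpos _).le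
    linarith
  set E : ℝ := 1 + ∑ i, |(p i : ℝ)| with hEdef
  have hE1 : (1:ℝ) ≤ E := by
    have : (0:ℝ) ≤ ∑ i, |(p i : ℝ)| := Finset.sum_nonneg fun i _ => abs_nonneg _
    simp only [hEdef]; linarith
  have hcbound : ∀ k, |(c k : ℝ)| ≤ E := by
    intro k
    rw [hcR k]
    have h1 : |(if k ∈ Y then (1:ℝ) else 0)| ≤ 1 := by split_ifs <;> simp
    have h2 : |∑ i, (p i : ℝ) * (if k ∈ X i then (1:ℝ) else 0)| ≤ ∑ i, |(p i : ℝ)| := by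
      refine (Finset.abs_sum_le_sum_abs _ _).trans (Finset.sum_le_sum fun i _ => ?_)
      rw [abs_mul]
      have h3 : |(if k ∈ X i then (1:ℝ) else 0)| ≤ 1 := by split_ifs <;> simp
      calc |(p i : ℝ)| * |(if k ∈ X i then (1:ℝ) else 0)| ≤ |(p i : ℝ)| * 1 :=
            mul_le_mul_of_nonneg_left h3 (abs_nonneg _)
        _ = |(p i : ℝ)| := mul_one _
    calc |(if k ∈ Y then (1:ℝ) else 0) - ∑ i, (p i : ℝ) * (if k ∈ X i then (1:ℝ) else 0)|
        ≤ |(if k ∈ Y then (1:ℝ) else 0)| + |∑ i, (p i : ℝ) * (if k ∈ X i then (1:ℝ) else 0)| := by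
          rw [sub_eq_add_neg]
          exact (abs_add_le _ _).trans (by rw [abs_neg])
      _ ≤ 1 + ∑ i, |(p i : ℝ)| := add_le_add h1 h2
      _ = E := hEdef.symm
  have hpartial : ∀ k : ℕ, |∑ j ∈ Finset.range (k+2), d j| ≤ E / q (k+1) := by
    intro k
    have hs : Summable fun i => d (i + (k+2)) := (summable_nat_add_iff _).2 hsumd
    have key : ∑ j ∈ Finset.range (k+2), d j = -∑' i, d (i + (k+2)) := by
      have h := Summable.sum_add_tsum_nat_add (k+2) hsumd
      rw [htsum0] at h
      linarith
    rw [key, abs_neg]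
    have h1 : |∑' i, d (i + (k+2))| ≤ ∑' i, |d (i + (k+2))| := by
      have := norm_tsum_le_tsum_norm (f := fun i => d (i + (k+2)))
        (by simpa [Real.norm_eq_abs] using hs.abs)
      simpa [Real.norm_eq_abs] using this
    have h2 : ∑' i, |d (i + (k+2))| ≤ ∑' i, E * f (i + (k+2)) := by
      refine Summable.tsum_le_tsum (fun i => ?_) hs.abs (((summable_nat_add_iff _).2 hsumf).mul_left E)
      rw [hdc, abs_mul, abs_of_nonneg (hfnonneg _)]
      exact mul_le_mul_of_nonneg_right (hcbound _) (hfnonneg _)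
    have h3 : ∑' i, E * f (i + (k+2)) = E * ∑' i, f (i + (k+2)) := tsum_mul_left
    have h4 : E * ∑' i, f (i + (k+2)) ≤ E * (1 / q (k+1)) :=
      mul_le_mul_of_nonneg_left (htailf k) (by linarith)
    calc |∑' i, d (i + (k+2))| ≤ ∑' i, |d (i + (k+2))| := h1
      _ ≤ ∑' i, E * f (i + (k+2)) := h2
      _ = E * ∑' i, f (i + (k+2)) := h3
      _ ≤ E * (1 / q (k+1)) := h4
      _ = E / q (k+1) := by ring
  have hSbound : ∀ k : ℕ, |∑ i ∈ Finset.range (k+1), (e i : ℝ) / q i| ≤ 2 * E / q (k+1) := by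
    intro k
    rw [hSid k]
    have h1 := hpartial k
    have h2 : |(c (k+1) : ℝ) / q (k+1)| ≤ E / q (k+1) := by
      rw [abs_div, abs_of_pos (hqpos _)]
      exact div_le_div_of_nonneg_right (hcbound _) (hqpos _).le
    calc |(∑ j ∈ Finset.range (k+2), d j) + (c (k+1) : ℝ) / q (k+1)|
        ≤ |∑ j ∈ Finset.range (k+2), d j| + |(c (k+1) : ℝ) / q (k+1)| := abs_add_le _ _
      _ ≤ E / q (k+1) + E / q (k+1) := add_le_add h1 h2
      _ = 2 * E / q (k+1) := by ring
  -- finite set of possible values of c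
  set G : Finset ℚ := Finset.univ.image
    (fun s : Bool × (Fin n → Bool) =>
      (if s.1 then (1:ℚ) else 0) - ∑ i, p i * (if s.2 i then (1:ℚ) else 0)) with hGdef
  have hcmem : ∀ k, c k ∈ G := by
    intro k
    refine Finset.mem_image.2 ⟨(decide (k ∈ Y), fun i => decide (k ∈ X i)), Finset.mem_univ _, ?_⟩
    simp only [hcdef, decide_eq_true_eq]
  have hemem : ∀ i, e i ∈ G - G := fun i => Finset.sub_mem_sub (hcmem (i+1)) (hcmem i)
  obtain ⟨N, hN⟩ := exists_nat_gt (2 * E)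
  have hNRpos : (0:ℝ) < N := by linarith
  have hNQ : ((N:ℚ)) ≠ 0 := by
    have : 0 < N := by exact_mod_cast hNRpos
    exact_mod_cast this.ne'
  set W : Finset ℚ := (G - G).image (fun x => x / (N:ℚ)) with hWdef
  set k0 : ℕ := W.sup (fun w => (hPex w).choose) with hk0def
  have hW : ∀ w ∈ W, ∀ k, k0 ≤ k → w ∈ P k := fun w hw k hk =>
    hPmono ((Finset.le_sup hw).trans hk) (hPex w).choose_spec
  have hezero : ∀ i, e i = 0 := by
    intro i0
    by_contra hne
    set k := max i0 k0 with hkdef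
    have hmem : ∀ i ≤ k, e i / (N:ℚ) ∈ P k := fun i _ =>
      hW _ (Finset.mem_image.2 ⟨e i, hemem i, rfl⟩) k (le_max_right _ _)
    have hnz : ∃ i ≤ k, e i / (N:ℚ) ≠ 0 := ⟨i0, le_max_left _ _, div_ne_zero hne hNQ⟩
    have hgt := hPbound k _ hmem hnz
    have hcast : ∀ i : ℕ, (((e i / (N:ℚ)) : ℚ) : ℝ) / q i = ((e i : ℝ) / q i) / N := by
      intro i; push_cast; ring
    rw [Finset.sum_congr rfl fun i _ => hcast i, ← Finset.sum_div, abs_div,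
      abs_of_pos hNRpos] at hgt
    have hq1 : 0 < q (k+1) := hqpos _
    have hS := hSbound k
    have hlt : 1 * (N:ℝ) < |∑ i ∈ Finset.range (k+1), (e i : ℝ) / q i| * q (k+1) :=
      (div_lt_div_iff₀ hq1 hNRpos).1 hgt
    have hle : |∑ i ∈ Finset.range (k+1), (e i : ℝ) / q i| * q (k+1) ≤ 2 * E := by
      exact (le_div_iff₀ hq1).1 hS
    linarith
  have hczero : ∀ k, c k = 0 := by
    intro k
    induction k with
    | zero => exact hc0
    | succ k ih =>
      have h := hezero k
      simp only [hedef, ih, sub_zero] at h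
      exact h
  -- truncation formula
  have htrunc : ∀ Z : Set ℕ, hK q (Z ∩ Set.Icc 1 m) = ∑ j ∈ Finset.Icc 1 m, Z.indicator f j := by
    intro Z
    rw [hKeq, tsum_eq_sum (s := Finset.Icc 1 m) ?_]
    · refine Finset.sum_congr rfl fun j hj => ?_
      rw [Finset.mem_Icc] at hj
      by_cases hz : j ∈ Z
      · rw [Set.indicator_of_mem (Set.mem_inter hz (Set.mem_Icc.2 hj)), Set.indicator_of_mem hz]
      · rw [Set.indicator_of_notMem (fun h => hz h.1), Set.indicator_of_notMem hz]
    · intro j hj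
      apply Set.indicator_of_notMem
      rw [Finset.mem_Icc] at hj
      intro h
      exact hj (Set.mem_Icc.1 h.2)
  rw [htrunc Y]
  simp only [htrunc, Finset.mul_sum]
  rw [Finset.sum_comm]
  refine Finset.sum_congr rfl fun j hj => ?_
  have hdj : d j = 0 := by rw [hdc, hczero j]; simp
  simp only [hddef] at hdj
  linarith
end

section
/- Borelness of the sup-function associated to a continuous function and K (the claim, in the section 'Definable sets are Borel', that the graph of l is Borel): let d, n ≥ 1, let U ⊆ ℝ^d × ℝ^n be open, and let f : U → ℝ be continuous with values in [0,1]. Define L : ℝ^d × ℝ → ℝ by L(x,y) = sup { f(x,c) : c ∈ K^n, (x,c) ∈ U, f(x,c) ≤ y }, with the supremum of the empty set taken to be 0. Then the graph of L, that is the set { (x, y, z) ∈ ℝ^d × ℝ × ℝ : z = L(x,y) }, is a Borel subset of ℝ^d × ℝ × ℝ. -/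
variable {q : ℕ → ℝ}

lemma qmono (hqpos : ∀ k, 0 < q k) (hqgrow : ∀ k, q (k + 1) > 3 * q k) : Monotone q := by
  apply monotone_nat_of_le_succ
  intro k
  have h3 := hqgrow k
  nlinarith [hqpos k]

lemma qge (hq0 : q 0 = 1) (hqpos : ∀ k, 0 < q k) (hqgrow : ∀ k, q (k + 1) > 3 * q k) (k : ℕ) : (3:ℝ)^k ≤ q k := by
  induction k with
  | zero => simp [hq0]
  | succ m ih =>
    have := hqgrow m
    calc (3:ℝ)^(m+1) = 3 * 3^m := by ring
    _ ≤ 3 * q m := by nlinarith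
    _ ≤ q (m+1) := le_of_lt this

/-- the bounding sequence -/
noncomputable def uK (q : ℕ → ℝ) (n : ℕ) : ℝ := 1 / q (n - 1) - 1 / q n

lemma uK_nonneg (hqpos : ∀ k, 0 < q k) (hqgrow : ∀ k, q (k + 1) > 3 * q k) (n : ℕ) : 0 ≤ uK q n := by
  have hm : q (n-1) ≤ q n := qmono hqpos hqgrow (Nat.sub_le n 1)
  have h1 := hqpos n
  have h2 := hqpos (n-1)
  have : 1 / q n ≤ 1 / q (n-1) := one_div_le_one_div_of_le h2 hm
  simpa [uK] using sub_nonneg.2 this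

lemma uK_summable (hq0 : q 0 = 1) (hqpos : ∀ k, 0 < q k) (hqgrow : ∀ k, q (k + 1) > 3 * q k) : Summable (uK q) := by
  have hsum : Summable (fun n : ℕ => 3 * (1/3:ℝ)^n) :=
    (summable_geometric_of_lt_one (by norm_num) (by norm_num)).mul_left 3
  refine Summable.of_nonneg_of_le (uK_nonneg hqpos hqgrow) ?_ hsum
  intro n
  have hqn : (3:ℝ)^(n-1) ≤ q (n-1) := qge hq0 hqpos hqgrow (n-1)
  have hp : (0:ℝ) < 3^(n-1) := by positivity
  have h1 : 1 / q (n-1) ≤ 1 / 3^(n-1) :=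
    one_div_le_one_div_of_le hp hqn
  have h2 : (0:ℝ) < 1 / q n := div_pos one_pos (hqpos n)
  have h3 : (1:ℝ) / 3^(n-1) ≤ 3 * (1/3)^n := by
    have hpow : (3:ℝ)^n ≤ 3 * 3^(n-1) := by
      calc (3:ℝ)^n ≤ 3^((n-1)+1) :=
        pow_le_pow_right₀ (by norm_num) (by omega)
      _ = 3 * 3^(n-1) := by rw [pow_succ]; ring
    rw [div_pow, one_pow, mul_div_assoc' 3 1 ((3:ℝ)^n), mul_one,
      div_le_div_iff₀ hp (by positivity)]
    nlinarith
  calc uK q n ≤ 1 / q (n-1) := by simp only [uK]; nlinarith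
  _ ≤ 1/3^(n-1) := h1
  _ ≤ 3 * (1/3)^n := h3

/-- the parametrizing map from Cantor space -/
noncomputable def gK (q : ℕ → ℝ) (b : ℕ → Bool) : ℝ :=
  ∑' n : ℕ, (fun v : Bool => if v = true ∧ 1 ≤ n then uK q n else 0) (b n)

lemma gK_continuous (hq0 : q 0 = 1) (hqpos : ∀ k, 0 < q k) (hqgrow : ∀ k, q (k + 1) > 3 * q k) : Continuous (gK q) := by
  apply continuous_tsum (u := uK q)
  · intro n
    exact (continuous_of_discreteTopology
      (f := fun v : Bool => if v = true ∧ 1 ≤ n then uK q n else 0)).comp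
      (continuous_apply n)
  · exact uK_summable hq0 hqpos hqgrow
  · intro n b
    by_cases h : b n = true ∧ 1 ≤ n <;>
      simp [h, abs_of_nonneg (uK_nonneg hqpos hqgrow n), uK_nonneg hqpos hqgrow n]

lemma Kset_eq_range (hqpos : ∀ k, 0 < q k) : Kset q = Set.range (gK q) := by
  ext x
  constructor
  · rintro ⟨X, hX, rfl⟩
    classical
    refine ⟨fun n => decide (n ∈ X), ?_⟩
    unfold gK hK
    congr 1
    ext n
    by_cases hn : n ∈ X
    · simp [hn, hX n hn, Set.indicator_of_mem, uK]
    · simp [hn, Set.indicator_of_notMem, uK]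
  · rintro ⟨b, rfl⟩
    refine ⟨{n | b n = true ∧ 1 ≤ n}, fun n hn => hn.2, ?_⟩
    unfold gK hK
    congr 1
    ext n
    by_cases hn : b n = true ∧ 1 ≤ n
    · simp [hn, Set.indicator_of_mem, uK, Set.mem_setOf_eq]
    · simp only [Set.indicator]
      simp [Set.mem_setOf_eq, hn, uK]

lemma Kset_isCompact (hq0 : q 0 = 1) (hqpos : ∀ k, 0 < q k) (hqgrow : ∀ k, q (k + 1) > 3 * q k) : IsCompact (Kset q) := by
  rw [Kset_eq_range hqpos]
  exact isCompact_range (gK_continuous hq0 hqpos hqgrow)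



theorem stmt_19_aux (q : ℕ → ℝ) (hq0 : q 0 = 1) (hqpos : ∀ k, 0 < q k)
    (hqgrow : ∀ k, q (k + 1) > 3 * q k)
    (hKcomp : IsCompact (Kset q))
    (d n : ℕ) (hd : 1 ≤ d) (hn : 1 ≤ n)
    (U : Set ((Fin d → ℝ) × (Fin n → ℝ))) (hU : IsOpen U)
    (f : ((Fin d → ℝ) × (Fin n → ℝ)) → ℝ) (hf : ContinuousOn f U)
    (hf01 : ∀ u ∈ U, f u ∈ Set.Icc (0 : ℝ) 1) :
    MeasurableSet {w : (Fin d → ℝ) × ℝ × ℝ |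
      w.2.2 = sSup {z : ℝ | ∃ c : Fin n → ℝ,
        (∀ i, c i ∈ Kset q) ∧ (w.1, c) ∈ U ∧ f (w.1, c) = z ∧ z ≤ w.2.1}} := by
  classical
  have hKclosed : IsClosed (Kset q) := hKcomp.isClosed
  -- the value sets and the sup function
  set S : (Fin d → ℝ) × ℝ → Set ℝ := fun p =>
    {z : ℝ | ∃ c : Fin n → ℝ,
      (∀ i, c i ∈ Kset q) ∧ (p.1, c) ∈ U ∧ f (p.1, c) = z ∧ z ≤ p.2} with hSdef
  set L : (Fin d → ℝ) × ℝ → ℝ := fun p => sSup (S p) with hLdef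
  have hSsub : ∀ p, S p ⊆ Set.Icc (0:ℝ) 1 := by
    rintro p z ⟨c, _, hcU, rfl, _⟩
    exact hf01 _ hcU
  have hSbdd : ∀ p, BddAbove (S p) := fun p =>
    ⟨1, fun z hz => (hSsub p hz).2⟩
  have hL0 : ∀ p, 0 ≤ L p := by
    intro p
    rcases Set.eq_empty_or_nonempty (S p) with h | ⟨z, hz⟩
    · simp [hLdef, h, Real.sSup_empty]
    · exact le_trans (hSsub p hz).1 (le_csSup (hSbdd p) hz)
  -- compact exhaustion of U
  set V : ℕ → Set ((Fin d → ℝ) × (Fin n → ℝ)) := fun m =>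
    Metric.closedBall 0 (m+1) \ Metric.thickening (1/((m:ℝ)+1)) Uᶜ with hVdef
  have hVcl : ∀ m, IsClosed (V m) := fun m =>
    Metric.isClosed_closedBall.sdiff Metric.isOpen_thickening
  have hVU : ∀ m, V m ⊆ U := by
    intro m p hp
    by_contra hpU
    exact hp.2 (Metric.self_subset_thickening (by positivity) Uᶜ hpU)
  have hUV : U ⊆ ⋃ m, V m := by
    intro p hp
    rcases Metric.isOpen_iff.1 hU p hp with ⟨ε, hε, hball⟩
    rcases exists_nat_ge (max ε⁻¹ ‖p‖) with ⟨m, hm⟩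
    have hm1 : ε⁻¹ ≤ (m:ℝ) := le_trans (le_max_left _ _) hm
    have hm2 : ‖p‖ ≤ (m:ℝ) := le_trans (le_max_right _ _) hm
    refine Set.mem_iUnion.2 ⟨m, ?_, ?_⟩
    · rw [Metric.mem_closedBall, dist_zero_right]
      linarith
    · intro hth
      rcases Metric.mem_thickening_iff.1 hth with ⟨z, hzU, hdz⟩
      have h1 : 1/((m:ℝ)+1) < ε := by
        rw [div_lt_iff₀ (by positivity)]
        rw [inv_le_iff_one_le_mul₀ hε] at hm1  -- may need fixing
        nlinarith
      exact hzU (hball (by rw [Metric.mem_ball, dist_comm]; linarith))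
  -- projection with compact fibers
  have hπ : Continuous (fun w : ((Fin d → ℝ) × ℝ) × (Fin n → ℝ) => (w.1.1, w.2)) :=
    (continuous_fst.fst).prodMk continuous_snd
  set Kn : Set (Fin n → ℝ) := {c | ∀ i, c i ∈ Kset q} with hKndef
  have hKn : IsCompact Kn := by
    have hpi : Kn = Set.pi Set.univ (fun _ : Fin n => Kset q) := by
      ext c; simp [hKndef, Set.mem_pi]
    rw [hpi]
    exact isCompact_univ_pi (fun _ => hKcomp)
  haveI : CompactSpace ↥Kn := isCompact_iff_compactSpace.mp hKn
  have hclosedproj : ∀ (D : Set (((Fin d → ℝ) × ℝ) × (Fin n → ℝ))), IsClosed D →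
      (∀ w ∈ D, w.2 ∈ Kn) → IsClosed (Prod.fst '' D) := by
    intro D hD hDK
    have key : Prod.fst '' D =
        Prod.fst '' ((fun a : ((Fin d → ℝ) × ℝ) × ↥Kn =>
          (a.1, (a.2 : Fin n → ℝ))) ⁻¹' D) := by
      ext p
      constructor
      · rintro ⟨w, hw, rfl⟩
        exact ⟨(w.1, ⟨w.2, hDK w hw⟩), hw, rfl⟩
      · rintro ⟨a, ha, rfl⟩
        exact ⟨(a.1, a.2), ha, rfl⟩
    rw [key]
    exact isClosedMap_fst_of_compactSpace _
      (hD.preimage (continuous_fst.prodMk (continuous_subtype_val.comp continuous_snd)))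
  -- the closed sets D
  set D : ℝ → ℕ → ℕ → Set (((Fin d → ℝ) × ℝ) × (Fin n → ℝ)) := fun s m j =>
    {w | (∀ i, w.2 i ∈ Kset q) ∧ (w.1.1, w.2) ∈ V m ∧
      f (w.1.1, w.2) ≤ w.1.2 ∧ s + 1/((j:ℝ)+1) ≤ f (w.1.1, w.2)} with hDdef
  have hDcl : ∀ s m j, IsClosed (D s m j) := by
    intro s m j
    have h1 : IsClosed {w : ((Fin d → ℝ) × ℝ) × (Fin n → ℝ) | ∀ i, w.2 i ∈ Kset q} := by
      have he : {w : ((Fin d → ℝ) × ℝ) × (Fin n → ℝ) | ∀ i, w.2 i ∈ Kset q} =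
          ⋂ i, (fun w : ((Fin d → ℝ) × ℝ) × (Fin n → ℝ) => w.2 i) ⁻¹' Kset q := by
        ext w; simp
      rw [he]
      exact isClosed_iInter fun i =>
        hKclosed.preimage ((continuous_apply i).comp continuous_snd)
    have hT : IsClosed {w : ((Fin d → ℝ) × ℝ) × (Fin n → ℝ) | (w.1.1, w.2) ∈ V m} :=
      (hVcl m).preimage hπ
    have hfc : ContinuousOn (fun w : ((Fin d → ℝ) × ℝ) × (Fin n → ℝ) => f (w.1.1, w.2))
        {w | (w.1.1, w.2) ∈ V m} := by
      apply ContinuousOn.comp hf hπ.continuousOn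
      intro w hw
      exact hVU m hw
    have hGc : ContinuousOn
        (fun w : ((Fin d → ℝ) × ℝ) × (Fin n → ℝ) =>
          ((f (w.1.1, w.2) - w.1.2, f (w.1.1, w.2)) : ℝ × ℝ))
        {w | (w.1.1, w.2) ∈ V m} :=
      (hfc.sub (continuous_snd.comp continuous_fst).continuousOn).prodMk hfc
    have h2 : IsClosed ({w : ((Fin d → ℝ) × ℝ) × (Fin n → ℝ) | (w.1.1, w.2) ∈ V m} ∩
        (fun w : ((Fin d → ℝ) × ℝ) × (Fin n → ℝ) =>
          ((f (w.1.1, w.2) - w.1.2, f (w.1.1, w.2)) : ℝ × ℝ)) ⁻¹'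
          (Set.Iic (0:ℝ) ×ˢ Set.Ici (s + 1/((j:ℝ)+1)))) :=
      hGc.preimage_isClosed_of_isClosed hT (isClosed_Iic.prod isClosed_Ici)
    have heq : D s m j = {w : ((Fin d → ℝ) × ℝ) × (Fin n → ℝ) | ∀ i, w.2 i ∈ Kset q} ∩
        ({w : ((Fin d → ℝ) × ℝ) × (Fin n → ℝ) | (w.1.1, w.2) ∈ V m} ∩
        (fun w : ((Fin d → ℝ) × ℝ) × (Fin n → ℝ) =>
          ((f (w.1.1, w.2) - w.1.2, f (w.1.1, w.2)) : ℝ × ℝ)) ⁻¹'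
          (Set.Iic (0:ℝ) ×ˢ Set.Ici (s + 1/((j:ℝ)+1)))) := by
      ext w
      simp only [hDdef, Set.mem_setOf_eq, Set.mem_inter_iff, Set.mem_preimage,
        Set.mem_prod, Set.mem_Iic, Set.mem_Ici, sub_nonpos]
    rw [heq]
    exact h1.inter h2
  -- measurability of L via upper level sets
  have hL : Measurable L := by
    apply measurable_of_Ici
    intro t
    by_cases ht : t ≤ 0
    · have : L ⁻¹' Set.Ici t = Set.univ := by
        ext p
        simp only [Set.mem_preimage, Set.mem_Ici, Set.mem_univ, iff_true]
        exact le_trans ht (hL0 p)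
      rw [this]; exact MeasurableSet.univ
    · push_neg at ht
      have heq : L ⁻¹' Set.Ici t =
          ⋂ k : ℕ, ⋃ m : ℕ, ⋃ j : ℕ, Prod.fst '' D (t - 1/((k:ℝ)+1)) m j := by
        ext p
        simp only [Set.mem_preimage, Set.mem_Ici, Set.mem_iInter, Set.mem_iUnion]
        constructor
        · intro hLp k
          have hne : (S p).Nonempty := by
            by_contra hne
            rw [Set.not_nonempty_iff_eq_empty] at hne
            have : L p = 0 := by simp [hLdef, hne, Real.sSup_empty]
            linarith
          have hlt : t - 1/((k:ℝ)+1) < sSup (S p) := by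
            have : (0:ℝ) < 1/((k:ℝ)+1) := by positivity
            calc t - 1/((k:ℝ)+1) < t := by linarith
            _ ≤ L p := hLp
          obtain ⟨z, hzS, hzgt⟩ := exists_lt_of_lt_csSup hne hlt
          obtain ⟨c, hcK, hcU, hfz, hzy⟩ := hzS
          obtain ⟨m, hm⟩ := Set.mem_iUnion.1 (hUV hcU)
          obtain ⟨j, hj⟩ := exists_nat_one_div_lt
            (show (0:ℝ) < z - (t - 1/((k:ℝ)+1)) by linarith)
          refine ⟨m, j, (p, c), ⟨hcK, hm, ?_, ?_⟩, rfl⟩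
          · rw [hfz]; exact hzy
          · rw [hfz]
            have : (1:ℝ)/((j:ℝ)+1) < z - (t - 1/((k:ℝ)+1)) := by
              simpa using hj
            linarith
        · intro hmem
          by_contra hLp
          push_neg at hLp
          obtain ⟨k, hk⟩ := exists_nat_one_div_lt (show (0:ℝ) < t - L p by linarith)
          obtain ⟨m, j, w, hw, rfl⟩ := hmem k
          obtain ⟨hwK, hwV, hwle, hwge⟩ := hw
          have hzS : f (w.1.1, w.2) ∈ S w.1 :=
            ⟨w.2, hwK, hVU m hwV, rfl, hwle⟩
          have h1 : f (w.1.1, w.2) ≤ L w.1 := le_csSup (hSbdd w.1) hzS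
          have h2 : (1:ℝ)/((k:ℝ)+1) < t - L w.1 := by simpa using hk
          have h3 : (0:ℝ) < 1/((j:ℝ)+1) := by positivity
          linarith
      rw [heq]
      exact MeasurableSet.iInter fun k => MeasurableSet.iUnion fun m =>
        MeasurableSet.iUnion fun j =>
          (hclosedproj _ (hDcl _ m j) (fun w hw => hw.1)).measurableSet
  -- conclude
  have hfin : Measurable (fun w : (Fin d → ℝ) × ℝ × ℝ => L (w.1, w.2.1)) :=
    hL.comp (measurable_fst.prodMk (measurable_fst.comp measurable_snd))
  exact measurableSet_eq_fun (measurable_snd.comp measurable_snd) hfin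

/-- Borelness of the sup-function associated to a continuous function and `K`:
the graph of `L(x,y) = sup {f(x,c) : c ∈ Kⁿ, (x,c) ∈ U, f(x,c) ≤ y}` (with
`sup ∅ = 0`, which is the convention for `sSup` on `ℝ`) is a Borel subset of
`ℝ^d × ℝ × ℝ`. -/
theorem stmt_19 (q : ℕ → ℝ) (hq0 : q 0 = 1) (hqpos : ∀ k, 0 < q k)
    (hqgrow : ∀ k, q (k + 1) > 3 * q k)
    (d n : ℕ) (hd : 1 ≤ d) (hn : 1 ≤ n)
    (U : Set ((Fin d → ℝ) × (Fin n → ℝ))) (hU : IsOpen U)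
    (f : ((Fin d → ℝ) × (Fin n → ℝ)) → ℝ) (hf : ContinuousOn f U)
    (hf01 : ∀ u ∈ U, f u ∈ Set.Icc (0 : ℝ) 1) :
    MeasurableSet {w : (Fin d → ℝ) × ℝ × ℝ |
      w.2.2 = sSup {z : ℝ | ∃ c : Fin n → ℝ,
        (∀ i, c i ∈ Kset q) ∧ (w.1, c) ∈ U ∧ f (w.1, c) = z ∧ z ≤ w.2.1}} :=
  stmt_19_aux q hq0 hqpos hqgrow (Kset_isCompact hq0 hqpos hqgrow) d n hd hn U hU f hf hf01
end
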